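/- arXiv:2412.01763 — 2 statements merged into one kernel-verified Lean document; each statement's English description precedes it below -/
import Mathlib

section
/- Fix b, h > 0 and 0 < λ < 1 ≤ M, and let ρ = b/(b+h). For every Borel measurable policy π : ℝ^N → [0, M] acting on N censored samples, the supremum over demand distributions G ∈ 𝒢 with G⁻(λ) > ρ of E_{D_1,…,D_N i.i.d. ∼ G}[ Regret_G(π(min(D_1,λ), …, min(D_N,λ))) − Δ_G ] is at least λ·(b+h)·√(1−ρ)·min(ρ, 1−ρ)·e^{−1/2} / (64·√N). -/
/-!
Le Cam's two-point method. Take the three-atom demand laws `G₊`, `G₋` with atoms `0 < a = λ/2 < M`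
and masses `ρ ± ε`, `(1 - ρ)/2 ∓ ε`, `(1 - ρ)/2`. Both put mass `ρ + (1 - ρ)/2 > ρ` below `λ`, so
their `ρ`-quantiles (`0` for `G₊`, `a` for `G₋`) lie in the observable region and are shared by
every law of the ambiguity set. Hence `Δ ≤ 0`, and the worst-case regret of `q` dominates the
excess cost of `q` under `G` itself. For every `q` the excess costs under `G₊` and `G₋` add up to
at least `(b + h) ε a`, so the two expected excess regrets add up to at least that times the overlap
`∑ min(P₊, P₋)` of the `N`-sample laws, which is at least half the squared Bhattacharyya
coefficient `(∑ₖ √(p₊ₖ p₋ₖ))^(2N)`. For `ε = √(1 - ρ) min(ρ, 1 - ρ) / (8 √N)` that coefficient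
is `1 - O(1/N)`, so its `2N`-th power stays bounded below. The argument never uses the censoring:
it applies to any bounded function of the full sample.
-/

open MeasureTheory Set

/-- Newsvendor cost of ordering quantity `q` under demand distribution `F`,
with underage cost `b` and overage cost `h`. -/
noncomputable def nvCost (b h : ℝ) (F : Measure ℝ) (q : ℝ) : ℝ :=
  ∫ x, (b * max (x - q) 0 + h * max (q - x) 0) ∂F

/-- Optimal newsvendor quantity: the `ρ`-th quantile of `F`. -/
noncomputable def qStar (ρ : ℝ) (F : Measure ℝ) : ℝ :=
  sInf {q : ℝ | ρ ≤ (F (Iic q)).toReal}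

/-- The set `𝒢` of admissible demand distributions: Borel probability measures on ℝ
supported on `[0, ∞)` with finite mean and optimal newsvendor quantity at most `M`. -/
def GoodDist (ρ M : ℝ) : Set (Measure ℝ) :=
  {F | IsProbabilityMeasure F ∧ F (Iio 0) = 0 ∧ Integrable id F ∧ qStar ρ F ≤ M}

/-- The ambiguity set `𝒜_λ`: all admissible distributions agreeing with `G` before `lam`. -/
def Ambig (ρ M : ℝ) (G : Measure ℝ) (lam : ℝ) : Set (Measure ℝ) :=
  {F | F ∈ GoodDist ρ M ∧ ∀ x < lam, F (Iic x) = G (Iic x)}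

/-- Worst-case regret of an ordering quantity `q` over the ambiguity set. -/
noncomputable def Regret (b h ρ M : ℝ) (G : Measure ℝ) (lam q : ℝ) : ℝ :=
  sSup ((fun F => nvCost b h F q - nvCost b h F (qStar ρ F)) '' Ambig ρ M G lam)

/-- Minimax risk `Δ`. -/
noncomputable def Risk (b h ρ M : ℝ) (G : Measure ℝ) (lam : ℝ) : ℝ :=
  sInf (Regret b h ρ M G lam '' Icc 0 M)

/-- The unidentifiable ordering quantity `q†_G`. -/
noncomputable def qDagger (b h M : ℝ) (G : Measure ℝ) (lam : ℝ) : ℝ :=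
  (b * M + h * lam - (b + h) * (G (Iio lam)).toReal * M) /
    ((b + h) * (1 - (G (Iio lam)).toReal))

/-- The two-point-tail distribution `F_p`: agrees with `G` on `[0, λ)`, places an atom
of mass `p` at `λ` and an atom of mass `1 - p - G⁻(λ)` at `M`. -/
noncomputable def Fp (G : Measure ℝ) (lam M p : ℝ) : Measure ℝ :=
  G.restrict (Iio lam) + ENNReal.ofReal p • Measure.dirac lam +
    ENNReal.ofReal (1 - p - (G (Iio lam)).toReal) • Measure.dirac M

/-- The `N`-fold product (i.i.d.) measure of `G` (equal to `Measure.pi` whenever `G`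
is sigma-finite, in particular for probability measures). -/
noncomputable def iidPi (N : ℕ) (G : Measure ℝ) : Measure (Fin N → ℝ) := by
  classical
  exact if h : SigmaFinite G then
    haveI := h
    Measure.pi fun _ => G
  else 0

noncomputable def atomicMeasure {α ι : Type*} [MeasurableSpace α] [Fintype ι]
    (w : ι → ℝ) (v : ι → α) : Measure α :=
  ∑ k, (w k).toNNReal • Measure.dirac (v k)

instance {α ι : Type*} [MeasurableSpace α] [Fintype ι] (w : ι → ℝ) (v : ι → α) :
    IsFiniteMeasure (atomicMeasure w v) := by
  unfold atomicMeasure; infer_instance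

section AtomicMeasure

open scoped Classical

variable {α ι : Type*} [MeasurableSpace α] [MeasurableSingletonClass α] [Fintype ι]
  {w : ι → ℝ}

lemma atomicMeasure_apply (v : ι → α) (s : Set α) :
    atomicMeasure w v s = ∑ k, if v k ∈ s then ENNReal.ofReal (w k) else 0 := by
  simp only [atomicMeasure, Measure.coe_finsetSum, Finset.sum_apply, Measure.smul_apply,
    Measure.dirac_apply, Set.indicator_apply]
  refine Finset.sum_congr rfl fun k _ => ?_
  split_ifs <;> simp [ENNReal.ofReal]

lemma measureReal_atomicMeasure (hw : ∀ k, 0 ≤ w k) (v : ι → α) (s : Set α) :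
    (atomicMeasure w v).real s = ∑ k, if v k ∈ s then w k else 0 := by
  rw [measureReal_def, atomicMeasure_apply, ENNReal.toReal_sum fun k _ => by split_ifs <;> simp]
  refine Finset.sum_congr rfl fun k _ => ?_
  split_ifs <;> simp [hw k]

lemma isProbabilityMeasure_atomicMeasure (hw : ∀ k, 0 ≤ w k) (hs : ∑ k, w k = 1)
    (v : ι → α) : IsProbabilityMeasure (atomicMeasure w v) := by
  constructor
  rw [atomicMeasure_apply, ← ENNReal.ofReal_one, ← hs,
    ENNReal.ofReal_sum_of_nonneg fun k _ => hw k]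
  simp

lemma integral_atomicMeasure (hw : ∀ k, 0 ≤ w k) (v : ι → α) (f : α → ℝ) :
    ∫ x, f x ∂atomicMeasure w v = ∑ k, w k * f (v k) := by
  rw [atomicMeasure, integral_finsetSum_measure fun k _ =>
    (integrable_dirac (by simp)).smul_measure_nnreal]
  simp [integral_smul_nnreal_measure, NNReal.smul_def, hw]

lemma integrable_atomicMeasure (v : ι → α) (f : α → ℝ) : Integrable f (atomicMeasure w v) :=
  integrable_finsetSum_measure.2 fun _ _ => (integrable_dirac (by simp)).smul_measure_nnreal

lemma pi_atomicMeasure {κ : Type*} [Fintype κ] [DecidableEq κ] (hw : ∀ k, 0 ≤ w k)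
    (v : ι → α) :
    Measure.pi (fun _ : κ => atomicMeasure w v) =
      atomicMeasure (fun x : κ → ι => ∏ i, w (x i)) (fun x i => v (x i)) := by
  refine Measure.pi_eq fun s _ => ?_
  simp only [atomicMeasure_apply, Fintype.prod_sum, Set.mem_univ_pi, Fintype.prod_ite_zero]
  refine Finset.sum_congr rfl fun x _ => ?_
  rw [ENNReal.ofReal_prod_of_nonneg fun i _ => hw (x i)]

end AtomicMeasure

def nvLoss (b h q x : ℝ) : ℝ := b * max (x - q) 0 + h * max (q - x) 0

section Newsvendor

variable {b h ρ lam q q' x : ℝ} {F G : Measure ℝ}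

lemma nvCost_eq_integral_nvLoss : nvCost b h F q = ∫ x, nvLoss b h q x ∂F := rfl

lemma nvLoss_of_le (hxq : x ≤ q) : nvLoss b h q x = h * (q - x) := by
  simp [nvLoss, hxq, sub_nonneg.2 hxq]

lemma nvLoss_of_ge (hqx : q ≤ x) : nvLoss b h q x = b * (x - q) := by
  simp [nvLoss, hqx, sub_nonneg.2 hqx]

lemma nvLoss_sub_nvLoss_le (hb : 0 ≤ b) (hh : 0 ≤ h) :
    nvLoss b h q x - nvLoss b h q' x ≤ (b + h) * |q - q'| := by
  have h₁ := abs_max_sub_max_le_abs (x - q) (x - q') 0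
  have h₂ := abs_max_sub_max_le_abs (q - x) (q' - x) 0
  rw [show x - q - (x - q') = -(q - q') by ring, abs_neg] at h₁
  rw [show q - x - (q' - x) = q - q' by ring] at h₂
  unfold nvLoss
  nlinarith [mul_le_mul_of_nonneg_left ((le_abs_self _).trans h₁) hb,
    mul_le_mul_of_nonneg_left ((le_abs_self _).trans h₂) hh]

lemma integrable_nvLoss [IsFiniteMeasure F] (hF : Integrable id F) (b h q : ℝ) :
    Integrable (nvLoss b h q) F :=
  (((hF.sub (integrable_const q)).sup (integrable_const 0)).const_mul b).add
    ((((integrable_const q).sub hF).sup (integrable_const 0)).const_mul h)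

lemma nvCost_sub_nvCost_le [IsProbabilityMeasure F] (hF : Integrable id F)
    (hb : 0 ≤ b) (hh : 0 ≤ h) (q q' : ℝ) :
    nvCost b h F q - nvCost b h F q' ≤ (b + h) * |q - q'| := by
  rw [nvCost_eq_integral_nvLoss, nvCost_eq_integral_nvLoss,
    ← integral_sub (integrable_nvLoss hF b h q) (integrable_nvLoss hF b h q')]
  calc ∫ x, (nvLoss b h q x - nvLoss b h q' x) ∂F ≤ ∫ _, (b + h) * |q - q'| ∂F :=
        integral_mono ((integrable_nvLoss hF b h q).sub (integrable_nvLoss hF b h q'))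
          (integrable_const _) fun x => nvLoss_sub_nvLoss_le hb hh
    _ = (b + h) * |q - q'| := by simp

lemma abs_nvCost_sub_nvCost_le [IsProbabilityMeasure F] (hF : Integrable id F)
    (hb : 0 ≤ b) (hh : 0 ≤ h) (q q' : ℝ) :
    |nvCost b h F q - nvCost b h F q'| ≤ (b + h) * |q - q'| :=
  abs_sub_le_iff.2 ⟨nvCost_sub_nvCost_le hF hb hh q q',
    abs_sub_comm q q' ▸ nvCost_sub_nvCost_le hF hb hh q' q⟩

lemma qStar_nonneg (hρ : 0 < ρ) (hF : F (Iio 0) = 0) : 0 ≤ qStar ρ F := by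
  refine Real.sInf_nonneg fun q hq => not_lt.1 fun hq0 => ?_
  have : F (Iic q) = 0 := measure_mono_null (Iic_subset_Iio.2 hq0) hF
  simp [this] at hq
  linarith

lemma qStar_eq_of_cdf [IsFiniteMeasure F] {t : ℝ} (ht : ρ ≤ F.real (Iic t))
    (hlt : ∀ q < t, F.real (Iic q) < ρ) : qStar ρ F = t := by
  have : {q : ℝ | ρ ≤ F.real (Iic q)} = Ici t := by
    ext q
    exact ⟨fun hq => not_lt.1 fun hqt => (hlt q hqt).not_ge hq,
      fun hq => ht.trans (measureReal_mono (Iic_subset_Iic.2 hq))⟩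
  rw [qStar]
  exact (congrArg sInf this).trans csInf_Ici

lemma qStar_eq_of_agree [IsFiniteMeasure F] {t : ℝ}
    (hagree : ∀ x < lam, F (Iic x) = G (Iic x)) (htlam : t < lam)
    (ht : ρ ≤ G.real (Iic t)) (hlt : ∀ q < t, G.real (Iic q) < ρ) : qStar ρ F = t :=
  qStar_eq_of_cdf (by rwa [measureReal_def, hagree t htlam])
    fun q hq => by rw [measureReal_def, hagree q (hq.trans htlam)]; exact hlt q hq

end Newsvendor

section Regret

variable {b h ρ M lam q : ℝ} {F G : Measure ℝ}

lemma mem_ambig_self (hG : G ∈ GoodDist ρ M) : G ∈ Ambig ρ M G lam := ⟨hG, fun _ _ => rfl⟩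

lemma abs_nvCost_sub_nvCost_qStar_le (hb : 0 ≤ b) (hh : 0 ≤ h) (hρ : 0 < ρ)
    (hF : F ∈ GoodDist ρ M) (hq : q ∈ Icc 0 M) :
    |nvCost b h F q - nvCost b h F (qStar ρ F)| ≤ (b + h) * M := by
  obtain ⟨hprob, hF0, hint, hqM⟩ := hF
  have hq0 := qStar_nonneg hρ hF0
  have hdist : |q - qStar ρ F| ≤ M := abs_le.2 ⟨by linarith [hq.1], by linarith [hq.2]⟩
  exact (abs_nvCost_sub_nvCost_le hint hb hh _ _).trans
    (mul_le_mul_of_nonneg_left hdist (add_nonneg hb hh))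

lemma bddAbove_regretSet (hb : 0 ≤ b) (hh : 0 ≤ h) (hρ : 0 < ρ) (hq : q ∈ Icc 0 M) :
    BddAbove ((fun F => nvCost b h F q - nvCost b h F (qStar ρ F)) '' Ambig ρ M G lam) := by
  refine ⟨(b + h) * M, ?_⟩
  rintro _ ⟨F, hF, rfl⟩
  exact (le_abs_self _).trans (abs_nvCost_sub_nvCost_qStar_le hb hh hρ hF.1 hq)

lemma regret_le (hb : 0 ≤ b) (hh : 0 ≤ h) (hρ : 0 < ρ) (hG : G ∈ GoodDist ρ M)
    (hq : q ∈ Icc 0 M) : Regret b h ρ M G lam q ≤ (b + h) * M := by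
  refine csSup_le ⟨_, mem_image_of_mem _ (mem_ambig_self hG)⟩ ?_
  rintro _ ⟨F, hF, rfl⟩
  exact (le_abs_self _).trans (abs_nvCost_sub_nvCost_qStar_le hb hh hρ hF.1 hq)

lemma nvCost_sub_nvCost_qStar_le_regret (hb : 0 ≤ b) (hh : 0 ≤ h) (hρ : 0 < ρ)
    (hG : G ∈ GoodDist ρ M) (hq : q ∈ Icc 0 M) :
    nvCost b h G q - nvCost b h G (qStar ρ G) ≤ Regret b h ρ M G lam q :=
  le_csSup (bddAbove_regretSet hb hh hρ hq) (mem_image_of_mem _ (mem_ambig_self hG))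

lemma neg_le_regret (hb : 0 ≤ b) (hh : 0 ≤ h) (hρ : 0 < ρ) (hG : G ∈ GoodDist ρ M)
    (hq : q ∈ Icc 0 M) : -((b + h) * M) ≤ Regret b h ρ M G lam q :=
  (neg_le_of_abs_le (abs_nvCost_sub_nvCost_qStar_le hb hh hρ hG hq)).trans
    (nvCost_sub_nvCost_qStar_le_regret hb hh hρ hG hq)

end Regret

section Risk

variable {b h ρ M lam q : ℝ} {G : Measure ℝ}

lemma neg_le_risk (hb : 0 ≤ b) (hh : 0 ≤ h) (hρ : 0 < ρ) (hM : 0 ≤ M)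
    (hG : G ∈ GoodDist ρ M) : -((b + h) * M) ≤ Risk b h ρ M G lam :=
  le_csInf ⟨_, mem_image_of_mem _ (left_mem_Icc.2 hM)⟩ <| by
    rintro _ ⟨q, hq, rfl⟩
    exact neg_le_regret hb hh hρ hG hq

lemma risk_nonpos (hb : 0 ≤ b) (hh : 0 ≤ h) (hρ : 0 < ρ) (hG : G ∈ GoodDist ρ M) {t : ℝ}
    (ht : t ∈ Icc 0 M) (hid : ∀ F ∈ Ambig ρ M G lam, qStar ρ F = t) :
    Risk b h ρ M G lam ≤ 0 := by
  have hregret : Regret b h ρ M G lam t = 0 := by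
    have : (fun F => nvCost b h F t - nvCost b h F (qStar ρ F)) '' Ambig ρ M G lam = {0} := by
      refine eq_singleton_iff_unique_mem.2 ⟨⟨G, mem_ambig_self hG, ?_⟩, ?_⟩
      · simp [hid G (mem_ambig_self hG)]
      · rintro _ ⟨F, hF, rfl⟩
        simp [hid F hF]
    rw [Regret, this, csSup_singleton]
  refine csInf_le ⟨-((b + h) * M), ?_⟩ ⟨t, ht, hregret⟩
  rintro _ ⟨q, hq, rfl⟩
  exact neg_le_regret hb hh hρ hG hq

lemma nvCost_sub_le_regret_sub_risk (hb : 0 ≤ b) (hh : 0 ≤ h) (hρ : 0 < ρ)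
    (hG : G ∈ GoodDist ρ M) {t : ℝ} (ht : t ∈ Icc 0 M)
    (hid : ∀ F ∈ Ambig ρ M G lam, qStar ρ F = t) (hq : q ∈ Icc 0 M) :
    nvCost b h G q - nvCost b h G t ≤ Regret b h ρ M G lam q - Risk b h ρ M G lam := by
  have := nvCost_sub_nvCost_qStar_le_regret (lam := lam) hb hh hρ hG hq
  rw [hid G (mem_ambig_self hG)] at this
  linarith [risk_nonpos hb hh hρ hG ht hid]

end Risk

lemma iidPi_eq_pi (N : ℕ) (G : Measure ℝ) [SigmaFinite G] :
    iidPi N G = Measure.pi fun _ => G :=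
  dif_pos ‹_›

noncomputable def expectedExcessRegret (b h ρ M lam : ℝ) {N : ℕ} (ψ : (Fin N → ℝ) → ℝ)
    (G : Measure ℝ) : ℝ :=
  ∫ d, (Regret b h ρ M G lam (ψ d) - Risk b h ρ M G lam) ∂iidPi N G

section ExpectedExcessRegret

variable {b h ρ M lam : ℝ} {N : ℕ} {ψ : (Fin N → ℝ) → ℝ}

lemma expectedExcessRegret_le (hb : 0 ≤ b) (hh : 0 ≤ h) (hρ : 0 < ρ) (hM : 0 ≤ M)
    (hψ : ∀ d, ψ d ∈ Icc 0 M) {G : Measure ℝ} (hG : G ∈ GoodDist ρ M) :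
    expectedExcessRegret b h ρ M lam ψ G ≤ 2 * ((b + h) * M) := by
  have := hG.1
  rw [expectedExcessRegret, iidPi_eq_pi]
  by_cases hint : Integrable (fun d => Regret b h ρ M G lam (ψ d) - Risk b h ρ M G lam)
    (Measure.pi fun _ => G)
  · refine (integral_mono hint (integrable_const (2 * ((b + h) * M))) fun d => ?_).trans_eq
      (by simp)
    linarith [regret_le (lam := lam) hb hh hρ hG (hψ d), neg_le_risk (lam := lam) hb hh hρ hM hG]
  · rw [integral_undef hint]
    have := add_nonneg hb hh
    positivity

lemma sum_mul_nvCost_sub_le_expectedExcessRegret (hb : 0 ≤ b) (hh : 0 ≤ h) (hρ : 0 < ρ)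
    (hψ : ∀ d, ψ d ∈ Icc 0 M) {ι : Type*} [Fintype ι] {w : ι → ℝ} (hw : ∀ k, 0 ≤ w k)
    {v : ι → ℝ} (hG : atomicMeasure w v ∈ GoodDist ρ M) {t : ℝ} (ht : t ∈ Icc 0 M)
    (hid : ∀ F ∈ Ambig ρ M (atomicMeasure w v) lam, qStar ρ F = t) :
    ∑ x : Fin N → ι, (∏ i, w (x i)) *
        (nvCost b h (atomicMeasure w v) (ψ fun i => v (x i)) - nvCost b h (atomicMeasure w v) t)
      ≤ expectedExcessRegret b h ρ M lam ψ (atomicMeasure w v) := by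
  rw [expectedExcessRegret, iidPi_eq_pi, pi_atomicMeasure hw,
    integral_atomicMeasure fun x => Finset.prod_nonneg fun i _ => hw (x i)]
  exact Finset.sum_le_sum fun x _ => mul_le_mul_of_nonneg_left
    (nvCost_sub_le_regret_sub_risk hb hh hρ hG ht hid (hψ _))
    (Finset.prod_nonneg fun i _ => hw (x i))

end ExpectedExcessRegret

section TwoPoint

variable {ι : Type*} [Fintype ι]

lemma mul_sum_min_le {P₁ P₂ L₁ L₂ : ι → ℝ} {κ : ℝ} (hP₁ : ∀ x, 0 ≤ P₁ x)
    (hP₂ : ∀ x, 0 ≤ P₂ x) (hL₁ : ∀ x, 0 ≤ L₁ x) (hL₂ : ∀ x, 0 ≤ L₂ x)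
    (hL : ∀ x, κ ≤ L₁ x + L₂ x) :
    κ * ∑ x, min (P₁ x) (P₂ x) ≤ ∑ x, P₁ x * L₁ x + ∑ x, P₂ x * L₂ x := by
  rw [Finset.mul_sum, ← Finset.sum_add_distrib]
  refine Finset.sum_le_sum fun x _ => ?_
  calc κ * min (P₁ x) (P₂ x) ≤ (L₁ x + L₂ x) * min (P₁ x) (P₂ x) :=
        mul_le_mul_of_nonneg_right (hL x) (le_min (hP₁ x) (hP₂ x))
    _ ≤ P₁ x * L₁ x + P₂ x * L₂ x := by
        nlinarith [mul_le_mul_of_nonneg_right (min_le_left (P₁ x) (P₂ x)) (hL₁ x),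
          mul_le_mul_of_nonneg_right (min_le_right (P₁ x) (P₂ x)) (hL₂ x)]

lemma sq_sum_sqrt_mul_sqrt_le_two_mul_sum_min {P₁ P₂ : ι → ℝ} (hP₁ : ∀ x, 0 ≤ P₁ x)
    (hP₂ : ∀ x, 0 ≤ P₂ x) (hs₁ : ∑ x, P₁ x = 1) (hs₂ : ∑ x, P₂ x = 1) :
    (∑ x, √(P₁ x) * √(P₂ x)) ^ 2 ≤ 2 * ∑ x, min (P₁ x) (P₂ x) := by
  have hcs := Finset.sum_sq_le_sum_mul_sum_of_sq_le_mul Finset.univ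
    (r := fun x => √(P₁ x) * √(P₂ x)) (f := fun x => min (P₁ x) (P₂ x))
    (g := fun x => max (P₁ x) (P₂ x)) (fun x _ => le_min (hP₁ x) (hP₂ x))
    (fun x _ => (hP₁ x).trans (le_max_left _ _))
    (fun x _ => by rw [min_mul_max, mul_pow, Real.sq_sqrt (hP₁ x), Real.sq_sqrt (hP₂ x)])
  have hmax : ∑ x, max (P₁ x) (P₂ x) ≤ 2 := by
    calc ∑ x, max (P₁ x) (P₂ x) ≤ ∑ x, (P₁ x + P₂ x) :=
          Finset.sum_le_sum fun x _ => max_le (by linarith [hP₂ x]) (by linarith [hP₁ x])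
      _ = 2 := by rw [Finset.sum_add_distrib, hs₁, hs₂]; norm_num
  have hmin : 0 ≤ ∑ x, min (P₁ x) (P₂ x) := Finset.sum_nonneg fun x _ => le_min (hP₁ x) (hP₂ x)
  nlinarith

lemma pow_le_two_mul_sum_min_prod {w w' : ι → ℝ} (hw : ∀ k, 0 ≤ w k) (hw' : ∀ k, 0 ≤ w' k)
    (hs : ∑ k, w k = 1) (hs' : ∑ k, w' k = 1) (N : ℕ) :
    (∑ k, √(w k) * √(w' k)) ^ (2 * N) ≤
      2 * ∑ x : Fin N → ι, min (∏ i, w (x i)) (∏ i, w' (x i)) := by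
  have hprod {u : ι → ℝ} (hu : ∀ k, 0 ≤ u k) (x : Fin N → ι) : 0 ≤ ∏ i, u (x i) :=
    Finset.prod_nonneg fun i _ => hu (x i)
  have hsum {u : ι → ℝ} (hu : ∑ k, u k = 1) : ∑ x : Fin N → ι, ∏ i, u (x i) = 1 := by
    rw [← Fintype.sum_pow, hu, one_pow]
  calc (∑ k, √(w k) * √(w' k)) ^ (2 * N)
      = (∑ x : Fin N → ι, √(∏ i, w (x i)) * √(∏ i, w' (x i))) ^ 2 := by
        rw [pow_mul', Fintype.sum_pow]
        congr 1
        refine Finset.sum_congr rfl fun x _ => ?_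
        rw [Real.sqrt_prod _ fun i _ => hw (x i), Real.sqrt_prod _ fun i _ => hw' (x i),
          Finset.prod_mul_distrib]
    _ ≤ _ := sq_sum_sqrt_mul_sqrt_le_two_mul_sum_min (hprod hw) (hprod hw') (hsum hs) (hsum hs')

end TwoPoint

noncomputable def hardWeights (ρ ε : ℝ) : Fin 3 → ℝ := ![ρ + ε, (1 - ρ) / 2 - ε, (1 - ρ) / 2]

noncomputable def hardDist (ρ ε a M : ℝ) : Measure ℝ :=
  atomicMeasure (hardWeights ρ ε) ![0, a, M]

section HardDist

variable {ρ ε a M lam q : ℝ}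

lemma hardWeights_nonneg (hερ : |ε| ≤ ρ) (hεc : |ε| ≤ (1 - ρ) / 2) :
    ∀ k, 0 ≤ hardWeights ρ ε k := by
  obtain ⟨h₁, -⟩ := abs_le.1 hερ
  obtain ⟨-, h₂⟩ := abs_le.1 hεc
  intro k
  fin_cases k <;> simp [hardWeights] <;> linarith [abs_nonneg ε]

lemma sum_hardWeights : ∑ k, hardWeights ρ ε k = 1 := by
  simp [hardWeights, Fin.sum_univ_three]
  ring

lemma hardDist_Iio_zero (ha : 0 ≤ a) (hM : 0 ≤ M) : hardDist ρ ε a M (Iio 0) = 0 := by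
  simp [hardDist, atomicMeasure_apply, Fin.sum_univ_three, not_lt.2 ha, not_lt.2 hM]

lemma measureReal_hardDist_Iic_of_lt (hw : ∀ k, 0 ≤ hardWeights ρ ε k) (hq : 0 ≤ q)
    (hqa : q < a) (haM : a ≤ M) : (hardDist ρ ε a M).real (Iic q) = ρ + ε := by
  rw [hardDist, measureReal_atomicMeasure hw, Fin.sum_univ_three]
  simp [hardWeights, hq, not_le.2 hqa, not_le.2 (hqa.trans_le haM)]

lemma measureReal_hardDist_Iic_of_le (hw : ∀ k, 0 ≤ hardWeights ρ ε k) (ha : 0 ≤ a)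
    (haq : a ≤ q) (hqM : q < M) : (hardDist ρ ε a M).real (Iic q) = ρ + (1 - ρ) / 2 := by
  rw [hardDist, measureReal_atomicMeasure hw, Fin.sum_univ_three]
  simp [hardWeights, haq, hqM, ha.trans haq]

lemma measureReal_hardDist_Iio (hw : ∀ k, 0 ≤ hardWeights ρ ε k) (ha : 0 < a)
    (halam : a < lam) (hlamM : lam ≤ M) :
    (hardDist ρ ε a M).real (Iio lam) = ρ + (1 - ρ) / 2 := by
  rw [hardDist, measureReal_atomicMeasure hw, Fin.sum_univ_three]
  simp [hardWeights, halam, hlamM, ha.trans halam]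

lemma lt_hardDist_Iio (hρ : ρ < 1) (hw : ∀ k, 0 ≤ hardWeights ρ ε k) (ha : 0 < a)
    (halam : a < lam) (hlamM : lam ≤ M) : ρ < (hardDist ρ ε a M (Iio lam)).toReal := by
  rw [← measureReal_def, measureReal_hardDist_Iio hw ha halam hlamM]
  linarith

lemma measureReal_hardDist_Iic_of_neg (ha : 0 ≤ a) (hM : 0 ≤ M) (hq : q < 0) :
    (hardDist ρ ε a M).real (Iic q) = 0 := by
  rw [measureReal_def, measure_mono_null (Iic_subset_Iio.2 hq) (hardDist_Iio_zero ha hM),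
    ENNReal.toReal_zero]

lemma qStar_eq_zero_of_agree_hardDist (hρ : 0 < ρ) (hε : 0 ≤ ε)
    (hw : ∀ k, 0 ≤ hardWeights ρ ε k) (ha : 0 < a) (haM : a ≤ M) (hlam : 0 < lam)
    {F : Measure ℝ} [IsFiniteMeasure F]
    (hF : ∀ x < lam, F (Iic x) = hardDist ρ ε a M (Iic x)) : qStar ρ F = 0 := by
  refine qStar_eq_of_agree hF hlam ?_ fun q hq => ?_
  · rw [measureReal_hardDist_Iic_of_lt hw le_rfl ha haM]
    linarith
  · rwa [measureReal_hardDist_Iic_of_neg ha.le (ha.le.trans haM) hq]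

lemma qStar_eq_of_agree_hardDist_of_neg (hρ : 0 < ρ) (hε : ε < 0)
    (hw : ∀ k, 0 ≤ hardWeights ρ ε k) (ha : 0 < a) (halam : a < lam) (haM : a < M)
    {F : Measure ℝ} [IsFiniteMeasure F]
    (hF : ∀ x < lam, F (Iic x) = hardDist ρ ε a M (Iic x)) : qStar ρ F = a := by
  refine qStar_eq_of_agree hF halam ?_ fun q hq => ?_
  · rw [measureReal_hardDist_Iic_of_le hw ha.le le_rfl haM]
    linarith [hw 2, show hardWeights ρ ε 2 = (1 - ρ) / 2 from rfl]
  · rcases lt_or_ge q 0 with hq0 | hq0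
    · rwa [measureReal_hardDist_Iic_of_neg ha.le (ha.trans haM).le hq0]
    · rw [measureReal_hardDist_Iic_of_lt hw hq0 hq haM.le]
      linarith

lemma hardDist_mem_goodDist (hρ : 0 < ρ) (hw : ∀ k, 0 ≤ hardWeights ρ ε k) (ha : 0 < a)
    (haM : a < M) : hardDist ρ ε a M ∈ GoodDist ρ M := by
  have : IsProbabilityMeasure (hardDist ρ ε a M) :=
    isProbabilityMeasure_atomicMeasure hw sum_hardWeights _
  refine ⟨this, hardDist_Iio_zero ha.le (ha.trans haM).le, integrable_atomicMeasure _ _, ?_⟩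
  rcases le_or_gt 0 ε with hε | hε
  · rw [qStar_eq_zero_of_agree_hardDist hρ hε hw ha haM.le (ha.trans haM) fun _ _ => rfl]
    exact (ha.trans haM).le
  · rw [qStar_eq_of_agree_hardDist_of_neg hρ hε hw ha haM haM fun _ _ => rfl]
    exact haM.le

lemma nvCost_hardDist (hw : ∀ k, 0 ≤ hardWeights ρ ε k) (b h q : ℝ) :
    nvCost b h (hardDist ρ ε a M) q = (ρ + ε) * nvLoss b h q 0
      + ((1 - ρ) / 2 - ε) * nvLoss b h q a + (1 - ρ) / 2 * nvLoss b h q M := by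
  rw [nvCost_eq_integral_nvLoss, hardDist, integral_atomicMeasure hw, Fin.sum_univ_three]
  rfl

lemma hardDist_separation {b h : ℝ} (hb : 0 ≤ b) (hh : 0 ≤ h) (hρb : ρ * (b + h) = b)
    (hε : 0 ≤ ε) (hw : ∀ k, 0 ≤ hardWeights ρ ε k) (hw' : ∀ k, 0 ≤ hardWeights ρ (-ε) k)
    (ha : 0 ≤ a) (haM : a ≤ M) (hq : q ∈ Icc 0 M) :
    0 ≤ nvCost b h (hardDist ρ ε a M) q - nvCost b h (hardDist ρ ε a M) 0 ∧
    0 ≤ nvCost b h (hardDist ρ (-ε) a M) q - nvCost b h (hardDist ρ (-ε) a M) a ∧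
    (b + h) * ε * a ≤
      (nvCost b h (hardDist ρ ε a M) q - nvCost b h (hardDist ρ ε a M) 0) +
      (nvCost b h (hardDist ρ (-ε) a M) q - nvCost b h (hardDist ρ (-ε) a M) a) := by
  obtain ⟨hq0, hqM⟩ := hq
  have hc : 0 ≤ (1 - ρ) / 2 := hw 2
  have hbh : 0 ≤ b + h := add_nonneg hb hh
  set D₁ := nvCost b h (hardDist ρ ε a M) q - nvCost b h (hardDist ρ ε a M) 0 with hD₁
  set D₂ := nvCost b h (hardDist ρ (-ε) a M) q - nvCost b h (hardDist ρ (-ε) a M) a with hD₂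
  simp only [nvCost_hardDist hw, nvCost_hardDist hw', nvLoss_of_le hq0, nvLoss_of_le ha,
    nvLoss_of_ge ha, nvLoss_of_ge hqM, nvLoss_of_ge haM, nvLoss_of_ge (ha.trans haM),
    nvLoss_of_le le_rfl] at hD₁ hD₂
  rcases le_total q a with hqa | haq
  · rw [nvLoss_of_ge hqa] at hD₁ hD₂
    have e₁ : D₁ = (b + h) * ε * q := by rw [hD₁]; linear_combination q * hρb
    have e₂ : D₂ = (b + h) * ε * (a - q) := by rw [hD₂]; linear_combination (q - a) * hρb
    have : 0 ≤ a - q := sub_nonneg.2 hqa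
    exact ⟨e₁ ▸ by positivity, e₂ ▸ by positivity, le_of_eq (by rw [e₁, e₂]; ring)⟩
  · rw [nvLoss_of_le haq] at hD₁ hD₂
    have e₁ : D₁ = (b + h) * (ε * a + (1 - ρ) / 2 * (q - a)) := by
      rw [hD₁]; linear_combination q * hρb
    have e₂ : D₂ = (b + h) * ((1 - ρ) / 2 * (q - a)) := by
      rw [hD₂]; linear_combination (q - a) * hρb
    have : 0 ≤ q - a := sub_nonneg.2 haq
    refine ⟨e₁ ▸ by positivity, e₂ ▸ by positivity, ?_⟩
    rw [e₁, e₂]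
    nlinarith [mul_nonneg hbh (mul_nonneg hc this)]

end HardDist

lemma hardDist_pair_le {b h ρ ε a M lam : ℝ} {N : ℕ} {ψ : (Fin N → ℝ) → ℝ} (hb : 0 ≤ b)
    (hh : 0 ≤ h) (hρ : 0 < ρ) (hρb : ρ * (b + h) = b) (hε : 0 < ε) (hερ : ε ≤ ρ)
    (hεc : ε ≤ (1 - ρ) / 2) (ha : 0 < a) (halam : a < lam) (haM : a < M)
    (hψ : ∀ d, ψ d ∈ Icc 0 M) :
    (b + h) * ε * a *
        ∑ x : Fin N → Fin 3, min (∏ i, hardWeights ρ ε (x i)) (∏ i, hardWeights ρ (-ε) (x i))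
      ≤ expectedExcessRegret b h ρ M lam ψ (hardDist ρ ε a M)
        + expectedExcessRegret b h ρ M lam ψ (hardDist ρ (-ε) a M) := by
  have hw := hardWeights_nonneg (ρ := ρ) (ε := ε) (by rwa [abs_of_pos hε])
    (by rwa [abs_of_pos hε])
  have hw' := hardWeights_nonneg (ρ := ρ) (ε := -ε) (by rwa [abs_neg, abs_of_pos hε])
    (by rwa [abs_neg, abs_of_pos hε])
  have hid : ∀ F ∈ Ambig ρ M (hardDist ρ ε a M) lam, qStar ρ F = 0 := fun F hF =>
    have := hF.1.1
    qStar_eq_zero_of_agree_hardDist hρ hε.le hw ha haM.le (ha.trans halam) hF.2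
  have hid' : ∀ F ∈ Ambig ρ M (hardDist ρ (-ε) a M) lam, qStar ρ F = a := fun F hF =>
    have := hF.1.1
    qStar_eq_of_agree_hardDist_of_neg hρ (neg_lt_zero.2 hε) hw' ha halam haM hF.2
  have hsep q (hq : q ∈ Icc 0 M) :=
    hardDist_separation hb hh hρb hε.le hw hw' ha.le haM.le hq
  calc _ ≤ _ := mul_sum_min_le (fun x => Finset.prod_nonneg fun i _ => hw (x i))
        (fun x => Finset.prod_nonneg fun i _ => hw' (x i)) (fun x => (hsep _ (hψ _)).1)
        (fun x => (hsep _ (hψ _)).2.1) (fun x => (hsep _ (hψ _)).2.2)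
    _ ≤ _ := add_le_add
        (sum_mul_nvCost_sub_le_expectedExcessRegret hb hh hρ hψ hw
          (hardDist_mem_goodDist hρ hw ha haM) ⟨le_rfl, (ha.trans haM).le⟩ hid)
        (sum_mul_nvCost_sub_le_expectedExcessRegret hb hh hρ hψ hw'
          (hardDist_mem_goodDist hρ hw' ha haM) ⟨ha.le, haM.le⟩ hid')

lemma sub_sq_div_le_sqrt_mul_sqrt {r ε : ℝ} (hr : 0 < r) (hε : 0 ≤ ε) (hεr : ε ≤ r) :
    r - ε ^ 2 / r ≤ √(r + ε) * √(r - ε) := by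
  rw [← Real.sqrt_mul (by linarith)]
  set t := ε ^ 2 / r with ht
  have htr : t * r = ε ^ 2 := div_mul_cancel₀ _ hr.ne'
  have ht0 : 0 ≤ t := by positivity
  have htle : t ≤ r := by rw [ht, div_le_iff₀ hr]; nlinarith
  refine Real.le_sqrt_of_sq_le ?_
  nlinarith

lemma one_sub_le_sum_sqrt_mul_sqrt_hardWeights {ρ ε : ℝ} (hρ0 : 0 < ρ) (hρ1 : ρ < 1)
    (hε : 0 ≤ ε) (hερ : ε ≤ ρ) (hεc : ε ≤ (1 - ρ) / 2) :
    1 - (ε ^ 2 / ρ + ε ^ 2 / ((1 - ρ) / 2)) ≤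
      ∑ k, √(hardWeights ρ ε k) * √(hardWeights ρ (-ε) k) := by
  have hc : 0 < (1 - ρ) / 2 := by linarith
  have h₁ := sub_sq_div_le_sqrt_mul_sqrt hρ0 hε hερ
  have h₂ := sub_sq_div_le_sqrt_mul_sqrt hc hε hεc
  simp only [Fin.sum_univ_three, hardWeights, Matrix.cons_val_zero, Matrix.cons_val_one,
    Matrix.cons_val_two, Matrix.head_cons, Matrix.tail_cons, sub_neg_eq_add, ← sub_eq_add_neg,
    Real.mul_self_sqrt hc.le]
  linarith [mul_comm √((1 - ρ) / 2 - ε) √((1 - ρ) / 2 + ε)]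

section HardEps

variable {ρ ε : ℝ} {N : ℕ}

lemma hardEps_pos_le (hρ0 : 0 < ρ) (hρ1 : ρ < 1) (hN : 1 ≤ N)
    (hε : ε = √(1 - ρ) * min ρ (1 - ρ) / (8 * √N)) : 0 < ε ∧ ε ≤ min ρ (1 - ρ) / 8 := by
  have hm : 0 < min ρ (1 - ρ) := lt_min hρ0 (by linarith)
  have hsN : 1 ≤ √(N : ℝ) := Real.one_le_sqrt.2 (by exact_mod_cast hN)
  have hsρ : √(1 - ρ) ≤ 1 := Real.sqrt_le_one.2 (by linarith)
  have hsρ0 : 0 < √(1 - ρ) := Real.sqrt_pos.2 (by linarith)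
  subst hε
  refine ⟨by positivity, ?_⟩
  rw [div_le_div_iff₀ (by positivity) (by norm_num)]
  nlinarith [mul_le_mul_of_nonneg_right (hsρ.trans hsN) hm.le]

lemma sq_div_add_sq_div_le (hρ0 : 0 < ρ) (hρ1 : ρ < 1) (hN : 1 ≤ N)
    (hε : ε = √(1 - ρ) * min ρ (1 - ρ) / (8 * √N)) :
    ε ^ 2 / ρ + ε ^ 2 / ((1 - ρ) / 2) ≤ 1 / (64 * N) := by
  set m := min ρ (1 - ρ)
  have hm0 : 0 ≤ m := le_min hρ0.le (by linarith)
  have hmρ : m ≤ ρ := min_le_left _ _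
  have hm1 : m ≤ 1 - ρ := min_le_right _ _
  have hN0 : (0 : ℝ) < N := by exact_mod_cast hN
  have hε2 : ε ^ 2 = (1 - ρ) * m ^ 2 / (64 * N) := by
    rw [hε, div_pow, mul_pow, mul_pow, Real.sq_sqrt (by linarith), Real.sq_sqrt hN0.le]
    ring
  have hm2 : m ^ 2 * (1 + ρ) ≤ ρ := by
    nlinarith [mul_le_mul hmρ hm1 hm0 hρ0.le, mul_nonneg hρ0.le hρ0.le]
  rw [hε2, div_add_div _ _ hρ0.ne' (by linarith), div_le_div_iff₀ (by positivity) (by positivity)]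
  field_simp
  nlinarith [mul_le_mul_of_nonneg_left hm2 (by positivity : (0 : ℝ) ≤ (1 - ρ) * N)]

lemma exp_neg_half_le_two_mul_sum_min (hρ0 : 0 < ρ) (hρ1 : ρ < 1) (hN : 1 ≤ N)
    (hε : ε = √(1 - ρ) * min ρ (1 - ρ) / (8 * √N)) :
    Real.exp (-(1 / 2)) ≤
      2 * ∑ x : Fin N → Fin 3,
        min (∏ i, hardWeights ρ ε (x i)) (∏ i, hardWeights ρ (-ε) (x i)) := by
  obtain ⟨hε0, hεm⟩ := hardEps_pos_le hρ0 hρ1 hN hε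
  have hm : min ρ (1 - ρ) ≤ ρ ∧ min ρ (1 - ρ) ≤ 1 - ρ := ⟨min_le_left _ _, min_le_right _ _⟩
  have hw := hardWeights_nonneg (ρ := ρ) (ε := ε) (by rw [abs_of_pos hε0]; linarith)
    (by rw [abs_of_pos hε0]; linarith)
  have hw' := hardWeights_nonneg (ρ := ρ) (ε := -ε)
    (by rw [abs_neg, abs_of_pos hε0]; linarith) (by rw [abs_neg, abs_of_pos hε0]; linarith)
  have hα := (sub_le_sub_left (sq_div_add_sq_div_le hρ0 hρ1 hN hε) 1).trans
    (one_sub_le_sum_sqrt_mul_sqrt_hardWeights hρ0 hρ1 hε0.le (by linarith) (by linarith))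
  have hN0 : (1 : ℝ) ≤ N := by exact_mod_cast hN
  have hexp : Real.exp (-(1 / 2)) ≤ 2 / 3 := by
    have := Real.add_one_le_exp (1 / 2)
    have : Real.exp (-(1 / 2)) * Real.exp (1 / 2) = 1 := by rw [← Real.exp_add]; norm_num
    nlinarith [Real.exp_pos (-(1 / 2))]
  calc Real.exp (-(1 / 2)) ≤ 1 + ((2 * N : ℕ) : ℝ) * -(1 / (64 * N)) := by
        push_cast
        field_simp
        linarith
    _ ≤ (1 + -(1 / (64 * N))) ^ (2 * N) := one_add_mul_le_pow (by
        rw [neg_le_neg_iff, div_le_iff₀ (by positivity)]; linarith) _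
    _ ≤ (∑ k, √(hardWeights ρ ε k) * √(hardWeights ρ (-ε) k)) ^ (2 * N) :=
        pow_le_pow_left₀
          (by rw [← sub_eq_add_neg, sub_nonneg, div_le_one (by positivity)]; linarith)
          (by linarith) _
    _ ≤ _ := pow_le_two_mul_sum_min_prod hw hw' sum_hardWeights sum_hardWeights N

end HardEps

lemma le_csSup_of_two_mul_le_add {S : Set ℝ} {x y c : ℝ} (hS : BddAbove S) (hx : x ∈ S)
    (hy : y ∈ S) (h : 2 * c ≤ x + y) : c ≤ sSup S := by
  rcases le_total x y with hxy | hyx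
  · exact (by linarith : c ≤ y).trans (le_csSup hS hy)
  · exact (by linarith : c ≤ x).trans (le_csSup hS hx)

theorem stmt17_general (b h M lam ρ : ℝ) (hb : 0 < b) (hh : 0 < h)
    (hlam0 : 0 < lam) (hlam1 : lam < 1) (hM : 1 ≤ M)
    (hρ : ρ = b / (b + h)) (N : ℕ) (hN : 1 ≤ N)
    (π : (Fin N → ℝ) → ℝ) (hrange : ∀ d, π d ∈ Icc (0 : ℝ) M) :
    lam * (b + h) * Real.sqrt (1 - ρ) * min ρ (1 - ρ) * Real.exp (-(1 / 2 : ℝ)) /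
        (64 * Real.sqrt (N : ℝ)) ≤
      sSup {r : ℝ | ∃ G ∈ GoodDist ρ M, ρ < (G (Iio lam)).toReal ∧
        r = ∫ d, (Regret b h ρ M G lam (π fun i => min (d i) lam)
                    - Risk b h ρ M G lam) ∂(iidPi N G)} := by
  have hbh : 0 < b + h := add_pos hb hh
  have hρ0 : 0 < ρ := hρ ▸ div_pos hb hbh
  have hρ1 : ρ < 1 := hρ ▸ (div_lt_one hbh).2 (by linarith)
  have hρb : ρ * (b + h) = b := by rw [hρ, div_mul_cancel₀ _ hbh.ne']
  set ε := √(1 - ρ) * min ρ (1 - ρ) / (8 * √N) with hε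
  obtain ⟨hε0, hεm⟩ := hardEps_pos_le hρ0 hρ1 hN hε
  have hm : min ρ (1 - ρ) ≤ ρ ∧ min ρ (1 - ρ) ≤ 1 - ρ := ⟨min_le_left _ _, min_le_right _ _⟩
  have hG (s : ℝ) (hs : |s| ≤ ε) : hardDist ρ s (lam / 2) M ∈ GoodDist ρ M ∧
      ρ < (hardDist ρ s (lam / 2) M (Iio lam)).toReal :=
    have hw := hardWeights_nonneg (ρ := ρ) (by linarith) (by linarith)
    ⟨hardDist_mem_goodDist hρ0 hw (by linarith) (by linarith),
      lt_hardDist_Iio hρ1 hw (by linarith) (by linarith) (by linarith)⟩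
  have hεabs : |ε| ≤ ε ∧ |-ε| ≤ ε := by simp [abs_of_pos hε0]
  refine le_csSup_of_two_mul_le_add ⟨2 * ((b + h) * M), ?_⟩
    ⟨_, (hG ε hεabs.1).1, (hG ε hεabs.1).2, rfl⟩
    ⟨_, (hG (-ε) hεabs.2).1, (hG (-ε) hεabs.2).2, rfl⟩ ?_
  · rintro _ ⟨G, hG, -, rfl⟩
    exact expectedExcessRegret_le hb.le hh.le hρ0 (by linarith) (fun d => hrange _) hG
  calc _ = (b + h) * ε * (lam / 2) * (Real.exp (-(1 / 2)) / 2) := by rw [hε]; field_simp; ring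
    _ ≤ _ := by gcongr; linarith [exp_neg_half_le_two_mul_sum_min hρ0 hρ1 hN hε]
    _ ≤ _ := hardDist_pair_le (ψ := fun d => π fun i => min (d i) lam) hb.le hh.le hρ0 hρb hε0
        (by linarith) (by linarith) (by linarith) (by linarith) (by linarith) fun d => hrange _

/-- lower bound in the strictly identifiable regime. -/
theorem stmt17 (b h M lam ρ : ℝ) (hb : 0 < b) (hh : 0 < h)
    (hlam0 : 0 < lam) (hlam1 : lam < 1) (hM : 1 ≤ M)
    (hρ : ρ = b / (b + h)) (N : ℕ) (hN : 1 ≤ N)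
    (π : (Fin N → ℝ) → ℝ) (hmeas : Measurable π) (hrange : ∀ d, π d ∈ Icc (0 : ℝ) M) :
    lam * (b + h) * Real.sqrt (1 - ρ) * min ρ (1 - ρ) * Real.exp (-(1 / 2 : ℝ)) /
        (64 * Real.sqrt (N : ℝ)) ≤
      sSup {r : ℝ | ∃ G ∈ GoodDist ρ M, ρ < (G (Iio lam)).toReal ∧
        r = ∫ d, (Regret b h ρ M G lam (π fun i => min (d i) lam)
                    - Risk b h ρ M G lam) ∂(iidPi N G)} :=
  stmt17_general b h M lam ρ hb hh hlam0 hlam1 hM hρ N hN π hrange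
end

section
/- Fix b, h > 0 and 0 < λ < 1 ≤ M, and let ρ = b/(b+h). For every Borel measurable policy π : ℝ^N → [0, M] acting on N censored samples, the supremum over demand distributions G ∈ 𝒢 with |G⁻(λ) − ρ| ≤ √(1−ρ)/(4·√N) of E_{D_1,…,D_N i.i.d. ∼ G}[ Regret_G(π(min(D_1,λ), …, min(D_N,λ))) − Δ_G ] is at least λ·(b+h)·√(1−ρ)·min(ρ, 1−ρ)·e^{−1/2} / (32·√N). -/
open MeasureTheory Set

/-!
Le Cam's two-point method. Let `G±` put mass `ρ ± δ` at `λ/2` and the rest at `M`. Censored at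
`λ`, a sample of `G±` is `λ/2` or `λ`, so the data are Bernoulli vectors with likelihoods `w±`.

Under `G₊` every distribution of the ambiguity set has its `ρ`-quantile at `λ/2`, so `Δ ≤ 0`;
under `G₋` all these quantiles lie in `[λ, M]`, and the order `q̄` that balances the one-sided
slopes `h` and `s = (b+h)δ` gives `Δ ≤ V = hs(M-λ)/(h+s)`. Conversely, the two laws and their
copies with the atom at `M` moved to `λ` lie in the ambiguity sets and witness
`Regret₊ q + Regret₋ q ≥ V + sλ/2` for every `q`. As regret dominates risk, the two excess regrets
are nonnegative and add up to at least `sλ/2`, hence the two expected excesses add up to at least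
`sλ/2 · ∑ min (w₊, w₋)`.

By Cauchy–Schwarz, `2 ∑ min (w₊, w₋) ≥ BC^(2N)` for the Bhattacharyya coefficient
`BC = √((ρ+δ)(ρ-δ)) + √((1-ρ-δ)(1-ρ+δ)) ≥ 1 - δ²/(ρ(1-ρ))`. The choice
`δ = √(1-ρ) min(ρ, 1-ρ)/(4√N)` gives `32 N δ² ≤ ρ(1-ρ)`, so `BC^N ≥ 31/32` by Bernoulli's
inequality and `∑ min (w₊, w₋) ≥ e^{-1/2}/2`.
-/

namespace Newsvendor

noncomputable def loss (b h q x : ℝ) : ℝ := b * max (x - q) 0 + h * max (q - x) 0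

section Loss

variable {b h q q' x : ℝ}

lemma loss_of_le (hxq : x ≤ q) : loss b h q x = h * (q - x) := by
  rw [loss, max_eq_right (by linarith), max_eq_left (by linarith)]
  ring

lemma loss_of_ge (hqx : q ≤ x) : loss b h q x = b * (x - q) := by
  rw [loss, max_eq_left (by linarith), max_eq_right (by linarith)]
  ring

lemma mul_sub_le_loss (hb : 0 ≤ b) (hh : 0 ≤ h) (q x : ℝ) : h * (q - x) ≤ loss b h q x := by
  rcases le_total x q with hxq | hqx
  · rw [loss_of_le hxq]
  · rw [loss_of_ge hqx]
    nlinarith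

lemma abs_loss_sub_loss_le (hb : 0 ≤ b) (hh : 0 ≤ h) (q q' x : ℝ) :
    |loss b h q x - loss b h q' x| ≤ (b + h) * |q - q'| := by
  rw [abs_le]
  rcases le_total x q with hq | hq <;> rcases le_total x q' with hq' | hq' <;>
    simp only [loss_of_le, loss_of_ge, hq, hq'] <;>
    constructor <;> nlinarith [le_abs_self (q - q'), neg_abs_le (q - q')]

lemma loss_sub_loss_le_of_le (hb : 0 ≤ b) (hh : 0 ≤ h) (hqq' : q ≤ q') (x : ℝ) :
    loss b h q' x - loss b h q x ≤ h * (q' - q) := by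
  rcases le_total x q with hq | hq
  · rw [loss_of_le hq, loss_of_le (hq.trans hqq')]
    linarith
  rcases le_total x q' with hq' | hq'
  · rw [loss_of_ge hq, loss_of_le hq']
    nlinarith
  · rw [loss_of_ge hq, loss_of_ge hq']
    nlinarith

lemma loss_sub_loss_le_indicator (hb : 0 ≤ b) (hh : 0 ≤ h) (hqq' : q ≤ q') (x : ℝ) :
    loss b h q x - loss b h q' x ≤
      b * (q' - q) - (Iic q).indicator (fun _ => (b + h) * (q' - q)) x := by
  rcases le_or_gt x q with hq | hq
  · rw [indicator_of_mem (mem_Iic.2 hq), loss_of_le hq, loss_of_le (hq.trans hqq')]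
    linarith
  rw [indicator_of_notMem (by simpa using hq), loss_of_ge hq.le]
  rcases le_total x q' with hq' | hq'
  · rw [loss_of_le hq']
    nlinarith
  · rw [loss_of_ge hq']
    linarith

lemma integrable_loss (hb : 0 ≤ b) (hh : 0 ≤ h) {F : Measure ℝ} [IsFiniteMeasure F]
    (hF : Integrable id F) (q : ℝ) : Integrable (loss b h q) F := by
  refine (((hF.sub (integrable_const q)).abs).const_mul (b + h)).mono'
    (by unfold loss; fun_prop) (ae_of_all _ fun x => ?_)
  have := abs_loss_sub_loss_le hb hh q x x
  rw [loss_of_le le_rfl, sub_self, mul_zero, sub_zero, abs_sub_comm] at this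
  simpa [Real.norm_eq_abs] using this

end Loss

section Cost

variable {b h : ℝ} {F : Measure ℝ} [IsProbabilityMeasure F]

lemma nvCost_sub_nvCost (hb : 0 ≤ b) (hh : 0 ≤ h) (hF : Integrable id F) (q q' : ℝ) :
    nvCost b h F q - nvCost b h F q' = ∫ x, (loss b h q x - loss b h q' x) ∂F :=
  (integral_sub (integrable_loss hb hh hF q) (integrable_loss hb hh hF q')).symm

lemma abs_nvCost_sub_nvCost_le (hb : 0 ≤ b) (hh : 0 ≤ h) (hF : Integrable id F) (q q' : ℝ) :
    |nvCost b h F q - nvCost b h F q'| ≤ (b + h) * |q - q'| := by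
  rw [nvCost_sub_nvCost hb hh hF, ← Real.norm_eq_abs]
  simpa using norm_integral_le_of_norm_le_const (μ := F)
    (f := fun x => loss b h q x - loss b h q' x)
    (ae_of_all _ fun x => (abs_loss_sub_loss_le hb hh q q' x))

lemma nvCost_sub_nvCost_le_of_le (hb : 0 ≤ b) (hh : 0 ≤ h) (hF : Integrable id F) {q q' : ℝ}
    (hqq' : q ≤ q') : nvCost b h F q' - nvCost b h F q ≤ h * (q' - q) := by
  rw [nvCost_sub_nvCost hb hh hF]
  simpa using integral_mono ((integrable_loss hb hh hF q').sub (integrable_loss hb hh hF q))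
    (integrable_const _) (loss_sub_loss_le_of_le hb hh hqq')

lemma nvCost_sub_nvCost_le_cdf (hb : 0 ≤ b) (hh : 0 ≤ h) (hF : Integrable id F) {q q' : ℝ}
    (hqq' : q ≤ q') :
    nvCost b h F q - nvCost b h F q' ≤ (q' - q) * (b - (b + h) * (F (Iic q)).toReal) := by
  rw [nvCost_sub_nvCost hb hh hF]
  refine (integral_mono ((integrable_loss hb hh hF q).sub (integrable_loss hb hh hF q'))
    ((integrable_const _).sub ((integrable_const _).indicator measurableSet_Iic))
    (loss_sub_loss_le_indicator hb hh hqq')).trans_eq ?_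
  simp only [Pi.sub_apply]
  rw [integral_sub (integrable_const _) ((integrable_const _).indicator measurableSet_Iic),
    integral_const, integral_indicator_const _ measurableSet_Iic]
  simp only [measureReal_def, measure_univ, ENNReal.toReal_one, smul_eq_mul]
  ring

end Cost

section RegretRisk

variable {b h ρ M lam q : ℝ} {G F : Measure ℝ}

lemma qStar_nonneg (hρ : 0 < ρ) (hF : F (Iio 0) = 0) : 0 ≤ qStar ρ F := by
  refine Real.sInf_nonneg fun q hq => ?_
  by_contra! hq0
  have hq : ρ ≤ (F (Iic q)).toReal := hq
  rw [measure_mono_null (Iic_subset_Iio.2 hq0) hF, ENNReal.toReal_zero] at hq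
  linarith

lemma abs_nvCost_sub_nvCost_qStar_le (hb : 0 ≤ b) (hh : 0 ≤ h) (hρ : 0 < ρ)
    (hF : F ∈ GoodDist ρ M) (hq : q ∈ Icc 0 M) :
    |nvCost b h F q - nvCost b h F (qStar ρ F)| ≤ (b + h) * M := by
  obtain ⟨_, hF0, hFi, hqM⟩ := hF
  have := qStar_nonneg hρ hF0
  refine (abs_nvCost_sub_nvCost_le hb hh hFi _ _).trans
    (mul_le_mul_of_nonneg_left ?_ (by positivity))
  rw [abs_le]
  constructor <;> linarith [hq.1, hq.2]

lemma nvCost_sub_nvCost_qStar_le_regret (hb : 0 ≤ b) (hh : 0 ≤ h) (hρ : 0 < ρ)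
    (hq : q ∈ Icc 0 M) (hF : F ∈ Ambig ρ M G lam) :
    nvCost b h F q - nvCost b h F (qStar ρ F) ≤ Regret b h ρ M G lam q := by
  refine le_csSup ⟨(b + h) * M, ?_⟩ (mem_image_of_mem _ hF)
  rintro _ ⟨F', hF', rfl⟩
  exact le_of_abs_le (abs_nvCost_sub_nvCost_qStar_le hb hh hρ hF'.1 hq)

lemma abs_regret_le (hb : 0 ≤ b) (hh : 0 ≤ h) (hρ : 0 < ρ) (hq : q ∈ Icc 0 M) :
    |Regret b h ρ M G lam q| ≤ (b + h) * M := by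
  have hbhM : 0 ≤ (b + h) * M := mul_nonneg (by linarith) (hq.1.trans hq.2)
  rcases (Ambig ρ M G lam).eq_empty_or_nonempty with hA | ⟨F, hF⟩
  · simp [Regret, hA, hbhM]
  rw [abs_le]
  constructor
  · exact (neg_le_of_abs_le (abs_nvCost_sub_nvCost_qStar_le hb hh hρ hF.1 hq)).trans
      (nvCost_sub_nvCost_qStar_le_regret hb hh hρ hq hF)
  · refine Real.sSup_le ?_ hbhM
    rintro _ ⟨F', hF', rfl⟩
    exact le_of_abs_le (abs_nvCost_sub_nvCost_qStar_le hb hh hρ hF'.1 hq)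

lemma risk_le_regret (hb : 0 ≤ b) (hh : 0 ≤ h) (hρ : 0 < ρ) (hq : q ∈ Icc 0 M) :
    Risk b h ρ M G lam ≤ Regret b h ρ M G lam q := by
  refine csInf_le ⟨-((b + h) * M), ?_⟩ (mem_image_of_mem _ hq)
  rintro _ ⟨q', hq', rfl⟩
  exact neg_le_of_abs_le (abs_regret_le hb hh hρ hq')

lemma abs_risk_le (hb : 0 ≤ b) (hh : 0 ≤ h) (hρ : 0 < ρ) (hM : 0 ≤ M) :
    |Risk b h ρ M G lam| ≤ (b + h) * M := by
  have h0 : (0 : ℝ) ∈ Icc 0 M := ⟨le_rfl, hM⟩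
  rw [abs_le]
  constructor
  · refine le_csInf ((nonempty_Icc.2 hM).image _) ?_
    rintro _ ⟨q, hq, rfl⟩
    exact neg_le_of_abs_le (abs_regret_le hb hh hρ hq)
  · exact (risk_le_regret hb hh hρ h0).trans (le_of_abs_le (abs_regret_le hb hh hρ h0))

end RegretRisk

noncomputable def expectedExcessRegret (b h ρ M lam : ℝ) {N : ℕ} (π : (Fin N → ℝ) → ℝ)
    (G : Measure ℝ) : ℝ :=
  ∫ d, (Regret b h ρ M G lam (π fun i => min (d i) lam) - Risk b h ρ M G lam) ∂(iidPi N G)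

lemma iidPi_eq_pi (N : ℕ) (G : Measure ℝ) [SigmaFinite G] :
    iidPi N G = Measure.pi fun _ => G := by
  rw [iidPi, dif_pos ‹_›]

lemma abs_expectedExcessRegret_le {b h ρ M lam : ℝ} (hb : 0 ≤ b) (hh : 0 ≤ h) (hρ : 0 < ρ)
    (hM : 0 ≤ M) {N : ℕ} {π : (Fin N → ℝ) → ℝ} (hπ : ∀ d, π d ∈ Icc 0 M) {G : Measure ℝ}
    [IsProbabilityMeasure G] :
    |expectedExcessRegret b h ρ M lam π G| ≤ 2 * ((b + h) * M) := by
  have hbound : ∀ d : Fin N → ℝ,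
      ‖Regret b h ρ M G lam (π fun i => min (d i) lam) - Risk b h ρ M G lam‖ ≤
        2 * ((b + h) * M) := fun d => by
    rw [Real.norm_eq_abs, two_mul]
    exact (abs_sub _ _).trans
      (add_le_add (abs_regret_le hb hh hρ (hπ _)) (abs_risk_le hb hh hρ hM))
  rw [expectedExcessRegret, iidPi_eq_pi, ← Real.norm_eq_abs]
  simpa using norm_integral_le_of_norm_le_const (μ := Measure.pi fun _ : Fin N => G)
    (ae_of_all _ hbound)

section TwoPoint

noncomputable def twoPoint (p a c : ℝ) : Measure ℝ :=
  ENNReal.ofReal p • Measure.dirac a + ENNReal.ofReal (1 - p) • Measure.dirac c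

variable {p a c : ℝ}

lemma twoPoint_apply (p a c : ℝ) (s : Set ℝ) :
    twoPoint p a c s =
      ENNReal.ofReal p * s.indicator 1 a + ENNReal.ofReal (1 - p) * s.indicator 1 c := by
  simp [twoPoint, Measure.dirac_apply]

lemma twoPoint_toReal (hp0 : 0 ≤ p) (hp1 : p ≤ 1) (a c : ℝ) (s : Set ℝ) :
    (twoPoint p a c s).toReal = p * s.indicator 1 a + (1 - p) * s.indicator 1 c := by
  have hp1' : 0 ≤ 1 - p := sub_nonneg.2 hp1
  by_cases ha : a ∈ s <;> by_cases hc : c ∈ s <;>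
    simp [twoPoint_apply, ha, hc, ENNReal.toReal_add, hp0, hp1']

lemma isProbabilityMeasure_twoPoint (hp0 : 0 ≤ p) (hp1 : p ≤ 1) (a c : ℝ) :
    IsProbabilityMeasure (twoPoint p a c) := by
  constructor
  simp only [twoPoint_apply, indicator_univ, Pi.one_apply, mul_one]
  rw [← ENNReal.ofReal_add hp0 (sub_nonneg.2 hp1), add_sub_cancel, ENNReal.ofReal_one]

lemma integrable_twoPoint (f : ℝ → ℝ) (p a c : ℝ) : Integrable f (twoPoint p a c) := by
  rw [twoPoint, integrable_add_measure]
  exact ⟨(integrable_dirac enorm_lt_top).smul_measure ENNReal.ofReal_ne_top,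
    (integrable_dirac enorm_lt_top).smul_measure ENNReal.ofReal_ne_top⟩

lemma integral_twoPoint (hp0 : 0 ≤ p) (hp1 : p ≤ 1) (f : ℝ → ℝ) :
    ∫ x, f x ∂twoPoint p a c = p * f a + (1 - p) * f c := by
  rw [twoPoint, integral_add_measure
      ((integrable_dirac enorm_lt_top).smul_measure ENNReal.ofReal_ne_top)
      ((integrable_dirac enorm_lt_top).smul_measure ENNReal.ofReal_ne_top),
    integral_smul_measure, integral_smul_measure, integral_dirac, integral_dirac,
    ENNReal.toReal_ofReal hp0, ENNReal.toReal_ofReal (sub_nonneg.2 hp1), smul_eq_mul,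
    smul_eq_mul]

lemma nvCost_twoPoint (hp0 : 0 ≤ p) (hp1 : p ≤ 1) (b h q : ℝ) :
    nvCost b h (twoPoint p a c) q = p * loss b h q a + (1 - p) * loss b h q c :=
  integral_twoPoint hp0 hp1 _

end TwoPoint

section Quantile

variable {ρ x : ℝ} {F : Measure ℝ}

lemma qStar_eq_of_forall_lt (hx : ρ ≤ (F (Iic x)).toReal)
    (hlt : ∀ q < x, (F (Iic q)).toReal < ρ) : qStar ρ F = x :=
  IsLeast.csInf_eq ⟨hx, fun _ hq => not_lt.1 fun hqx => (hlt _ hqx).not_ge hq⟩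

lemma exists_le_toReal_measure_Iic [IsProbabilityMeasure F] (hρ : ρ < 1) :
    ∃ q, ρ ≤ (F (Iic q)).toReal := by
  have hlim : ENNReal.ofReal ρ < F univ := by simpa using hρ
  obtain ⟨q, hq⟩ := ((tendsto_measure_Iic_atTop F).eventually (lt_mem_nhds hlim)).exists
  refine ⟨q, (le_max_left ρ 0).trans ?_⟩
  rw [← ENNReal.toReal_ofReal']
  exact ENNReal.toReal_mono (measure_ne_top _ _) hq.le

lemma le_qStar_of_forall_lt [IsProbabilityMeasure F] (hρ : ρ < 1)
    (hlt : ∀ q < x, (F (Iic q)).toReal < ρ) : x ≤ qStar ρ F :=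
  le_csInf (exists_le_toReal_measure_Iic hρ) fun _ hq =>
    not_lt.1 fun hqx => (hlt _ hqx).not_ge hq

variable {p a c : ℝ}

lemma qStar_twoPoint_of_le (hρ : 0 < ρ) (hρp : ρ ≤ p) (hp1 : p ≤ 1) (hac : a < c) :
    qStar ρ (twoPoint p a c) = a := by
  have hp0 : 0 ≤ p := hρ.le.trans hρp
  refine qStar_eq_of_forall_lt ?_ fun q hq => ?_
  · rw [twoPoint_toReal hp0 hp1, indicator_of_mem (mem_Iic.2 le_rfl),
      indicator_of_notMem (by simpa using hac)]
    simpa using hρp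
  · rw [twoPoint_toReal hp0 hp1, indicator_of_notMem (by simpa using hq),
      indicator_of_notMem (by simp only [mem_Iic, not_le]; linarith)]
    simpa using hρ

lemma qStar_twoPoint_of_lt (hρ : ρ ≤ 1) (hpρ : p < ρ) (hp0 : 0 ≤ p) (hac : a < c) :
    qStar ρ (twoPoint p a c) = c := by
  have hp1 : p ≤ 1 := by linarith
  refine qStar_eq_of_forall_lt ?_ fun q hq => ?_
  · rw [twoPoint_toReal hp0 hp1, indicator_of_mem (mem_Iic.2 le_rfl),
      indicator_of_mem (mem_Iic.2 hac.le)]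
    simpa using hρ
  · rw [twoPoint_toReal hp0 hp1, indicator_of_notMem (a := c) (by simpa using hq)]
    by_cases ha : a ∈ Iic q <;> simp [ha] <;> linarith

end Quantile

section Product

variable {ι : Type*} [Fintype ι] {p : ℝ}

noncomputable def bernoulliWeight (p : ℝ) (v : ι → Bool) : ℝ := ∏ i, if v i then p else 1 - p

lemma bernoulliWeight_nonneg (hp0 : 0 ≤ p) (hp1 : p ≤ 1) (v : ι → Bool) :
    0 ≤ bernoulliWeight p v :=
  Finset.prod_nonneg fun i _ => by split_ifs <;> linarith

variable [DecidableEq ι]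

lemma sum_prod_ite_bool (r t : ℝ) :
    ∑ v : ι → Bool, ∏ i, (if v i then r else t) = (r + t) ^ Fintype.card ι := by
  rw [← Fintype.prod_sum (fun (_ : ι) (β : Bool) => if β then r else t)]
  simp

lemma sum_bernoulliWeight (p : ℝ) : ∑ v : ι → Bool, bernoulliWeight p v = 1 := by
  simp [bernoulliWeight, sum_prod_ite_bool]

lemma sum_sqrt_bernoulliWeight_mul {p p' : ℝ} (hp0 : 0 ≤ p) (hp1 : p ≤ 1) (hp0' : 0 ≤ p')
    (hp1' : p' ≤ 1) :
    ∑ v : ι → Bool, √(bernoulliWeight p v * bernoulliWeight p' v) =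
      (√(p * p') + √((1 - p) * (1 - p'))) ^ Fintype.card ι := by
  rw [← sum_prod_ite_bool]
  refine Finset.sum_congr rfl fun v _ => ?_
  rw [bernoulliWeight, bernoulliWeight, ← Finset.prod_mul_distrib,
    Real.sqrt_prod _ fun i _ => by split_ifs <;> nlinarith]
  exact Finset.prod_congr rfl fun i _ => by split_ifs <;> rfl

lemma pi_twoPoint (hp0 : 0 ≤ p) (hp1 : p ≤ 1) (a c : ℝ) :
    Measure.pi (fun _ : ι => twoPoint p a c) =
      ∑ v : ι → Bool, ENNReal.ofReal (bernoulliWeight p v) •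
        Measure.dirac (fun i => if v i then a else c) := by
  have := isProbabilityMeasure_twoPoint hp0 hp1 a c
  refine Measure.pi_eq fun s hs => ?_
  have hmass : ∀ β : Bool, 0 ≤ if β then p else 1 - p := fun β => by
    cases β <;> simp [hp0, hp1]
  have hfactor : ∀ i, twoPoint p a c (s i) = ∑ β : Bool,
      ENNReal.ofReal (if β then p else 1 - p) * (s i).indicator 1 (if β then a else c) :=
    fun i => by simp [twoPoint_apply]
  have hpi : MeasurableSet (((Finset.univ : Finset ι) : Set ι).pi s) :=
    MeasurableSet.pi (Finset.countable_toSet _) fun i _ => hs i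
  rw [← Finset.coe_univ]
  simp only [hfactor, Fintype.prod_sum, Measure.finsetSum_apply, Measure.smul_apply,
    smul_eq_mul, Measure.dirac_apply' _ hpi, indicator_pi_one_apply, Finset.prod_mul_distrib,
    bernoulliWeight, ENNReal.ofReal_prod_of_nonneg fun i _ => hmass _]

lemma integral_pi_twoPoint (hp0 : 0 ≤ p) (hp1 : p ≤ 1) (a c : ℝ) (f : (ι → ℝ) → ℝ) :
    ∫ d, f d ∂Measure.pi (fun _ : ι => twoPoint p a c) =
      ∑ v : ι → Bool, bernoulliWeight p v * f (fun i => if v i then a else c) := by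
  rw [pi_twoPoint hp0 hp1, integral_finsetSum_measure fun v _ =>
    (integrable_dirac enorm_lt_top).smul_measure ENNReal.ofReal_ne_top]
  refine Finset.sum_congr rfl fun v _ => ?_
  rw [integral_smul_measure, integral_dirac, ENNReal.toReal_ofReal
    (bernoulliWeight_nonneg hp0 hp1 v), smul_eq_mul]

end Product

section Overlap

variable {ι : Type*} [Fintype ι]

lemma sq_sum_sqrt_mul_le {a b : ι → ℝ} (ha : ∀ i, 0 ≤ a i) (hb : ∀ i, 0 ≤ b i) :
    (∑ i, √(a i * b i)) ^ 2 ≤ (∑ i, min (a i) (b i)) * ∑ i, (a i + b i) := by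
  have hcs := Real.sum_sqrt_mul_sqrt_le Finset.univ (fun i => le_min (ha i) (hb i))
    (fun i => (ha i).trans (le_max_left (a i) (b i)))
  simp only [← Real.sqrt_mul (le_min (ha _) (hb _)), min_mul_max] at hcs
  calc (∑ i, √(a i * b i)) ^ 2
      ≤ (√(∑ i, min (a i) (b i)) * √(∑ i, max (a i) (b i))) ^ 2 :=
        pow_le_pow_left₀ (Finset.sum_nonneg fun _ _ => Real.sqrt_nonneg _) hcs 2
    _ = (∑ i, min (a i) (b i)) * ∑ i, max (a i) (b i) := by
        rw [mul_pow, Real.sq_sqrt (Finset.sum_nonneg fun i _ => le_min (ha i) (hb i)),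
          Real.sq_sqrt (Finset.sum_nonneg fun i _ => (ha i).trans (le_max_left _ _))]
    _ ≤ (∑ i, min (a i) (b i)) * ∑ i, (a i + b i) :=
        mul_le_mul_of_nonneg_left
          (Finset.sum_le_sum fun i _ => max_le_add_of_nonneg (ha i) (hb i))
          (Finset.sum_nonneg fun i _ => le_min (ha i) (hb i))

lemma mul_sum_min_le {w w' f g : ι → ℝ} {c : ℝ} (hw : ∀ i, 0 ≤ w i) (hw' : ∀ i, 0 ≤ w' i)
    (hf : ∀ i, 0 ≤ f i) (hg : ∀ i, 0 ≤ g i) (hfg : ∀ i, c ≤ f i + g i) :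
    c * ∑ i, min (w i) (w' i) ≤ ∑ i, w i * f i + ∑ i, w' i * g i := by
  rw [Finset.mul_sum, ← Finset.sum_add_distrib]
  refine Finset.sum_le_sum fun i _ => ?_
  have hm : 0 ≤ min (w i) (w' i) := le_min (hw i) (hw' i)
  nlinarith [min_le_left (w i) (w' i), min_le_right (w i) (w' i), hf i, hg i, hfg i,
    mul_le_mul_of_nonneg_right (min_le_left (w i) (w' i)) (hf i),
    mul_le_mul_of_nonneg_right (min_le_right (w i) (w' i)) (hg i)]

variable [DecidableEq ι] {ρ δ : ℝ}

lemma sub_sq_div_le_sqrt {u : ℝ} (hu : 0 < u) (hδ0 : 0 ≤ δ) (hδu : δ ≤ u) :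
    u - δ ^ 2 / u ≤ √((u + δ) * (u - δ)) := by
  have hsq : 0 ≤ u ^ 2 - δ ^ 2 := by nlinarith
  have : u - δ ^ 2 / u = (u ^ 2 - δ ^ 2) / u := by field_simp
  rw [this, Real.le_sqrt (div_nonneg hsq hu.le) (by nlinarith), div_pow,
    div_le_iff₀ (by positivity)]
  nlinarith [mul_nonneg hsq (sq_nonneg δ)]

lemma one_sub_sq_div_le_sqrt_add_sqrt (hρ0 : 0 < ρ) (hρ1 : ρ < 1) (hδ0 : 0 ≤ δ) (hδρ : δ ≤ ρ)
    (hδ1 : δ ≤ 1 - ρ) :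
    1 - δ ^ 2 / (ρ * (1 - ρ)) ≤ √((ρ + δ) * (ρ - δ)) + √((1 - (ρ + δ)) * (1 - (ρ - δ))) := by
  have h1 := sub_sq_div_le_sqrt hρ0 hδ0 hδρ
  have h2 := sub_sq_div_le_sqrt (sub_pos.2 hρ1) hδ0 hδ1
  have hsplit : δ ^ 2 / (ρ * (1 - ρ)) = δ ^ 2 / ρ + δ ^ 2 / (1 - ρ) := by
    field_simp [(sub_pos.2 hρ1).ne']
    ring
  rw [show (1 - (ρ + δ)) * (1 - (ρ - δ)) = (1 - ρ + δ) * (1 - ρ - δ) by ring, hsplit]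
  linarith

lemma exp_neg_half_le_two_mul_sum_min (hρ0 : 0 < ρ) (hρ1 : ρ < 1) (hδ0 : 0 ≤ δ) (hδρ : δ ≤ ρ)
    (hδ1 : δ ≤ 1 - ρ)
    (hN : 32 * Fintype.card ι * δ ^ 2 ≤ ρ * (1 - ρ)) :
    Real.exp (-(1 / 2)) ≤
      2 * ∑ v : ι → Bool, min (bernoulliWeight (ρ + δ) v) (bernoulliWeight (ρ - δ) v) := by
  set n := Fintype.card ι
  set x := δ ^ 2 / (ρ * (1 - ρ))
  have hvar : 0 < ρ * (1 - ρ) := mul_pos hρ0 (by linarith)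
  have hx0 : 0 ≤ x := by positivity
  have hnx : n * x ≤ 1 / 32 := by
    rw [mul_div_assoc', div_le_iff₀ hvar]
    linarith
  have hx1 : x ≤ 1 := (div_le_one hvar).2 (by nlinarith)
  have hbern : 1 - n * x ≤ (1 - x) ^ n := by
    simpa [sub_eq_add_neg] using one_add_mul_le_pow (a := -x) (by linarith) n
  have hpow := pow_le_pow_left₀ (by linarith)
    (one_sub_sq_div_le_sqrt_add_sqrt hρ0 hρ1 hδ0 hδρ hδ1) n
  rw [← sum_sqrt_bernoulliWeight_mul (ι := ι) (p := ρ + δ) (p' := ρ - δ) (by linarith)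
    (by linarith) (by linarith) (by linarith)] at hpow
  have hcs := sq_sum_sqrt_mul_le
    (bernoulliWeight_nonneg (ι := ι) (p := ρ + δ) (by linarith) (by linarith))
    (bernoulliWeight_nonneg (p := ρ - δ) (by linarith) (by linarith))
  rw [Finset.sum_add_distrib, sum_bernoulliWeight, sum_bernoulliWeight] at hcs
  have hexp : Real.exp (-(1 / 2)) ≤ 2 / 3 := by
    rw [Real.exp_neg, inv_le_comm₀ (Real.exp_pos _) (by norm_num)]
    linarith [Real.add_one_le_exp (1 / 2 : ℝ)]
  nlinarith [pow_le_pow_left₀ (by linarith) (hbern.trans hpow) 2]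

end Overlap

section KnifeEdge

variable {b h ρ M lam x0 p q δ : ℝ} {F : Measure ℝ}

lemma twoPoint_mem_ambig (hρ0 : 0 < ρ) (hρ1 : ρ ≤ 1) (hp0 : 0 ≤ p) (hp1 : p ≤ 1)
    (hx0 : 0 ≤ x0) (hx0lam : x0 < lam) {t : ℝ} (hlamt : lam ≤ t) (htM : t ≤ M) :
    twoPoint p x0 t ∈ Ambig ρ M (twoPoint p x0 M) lam := by
  have hx0t : x0 < t := hx0lam.trans_le hlamt
  refine ⟨⟨isProbabilityMeasure_twoPoint hp0 hp1 x0 t, ?_, integrable_twoPoint _ _ _ _, ?_⟩,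
    fun x hx => ?_⟩
  · rw [twoPoint_apply, indicator_of_notMem (a := x0) (by simpa using hx0),
      indicator_of_notMem (a := t) (by simp only [mem_Iio, not_lt]; linarith)]
    simp
  · rcases le_or_gt ρ p with hρp | hpρ
    · rw [qStar_twoPoint_of_le hρ0 hρp hp1 hx0t]
      linarith
    · rwa [qStar_twoPoint_of_lt hρ1 hpρ hp0 hx0t]
  · rw [twoPoint_apply, twoPoint_apply,
      indicator_of_notMem (a := t) (by simp only [mem_Iic, not_le]; linarith),
      indicator_of_notMem (a := M) (by simp only [mem_Iic, not_le]; linarith)]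

lemma toReal_measure_Iic_of_mem_ambig (hp0 : 0 ≤ p) (hp1 : p ≤ 1) (hlamM : lam ≤ M)
    (hF : F ∈ Ambig ρ M (twoPoint p x0 M) lam) {x : ℝ} (hx : x < lam) :
    (F (Iic x)).toReal = p * (Iic x).indicator 1 x0 := by
  rw [hF.2 x hx, twoPoint_toReal hp0 hp1,
    indicator_of_notMem (a := M) (by simp only [mem_Iic, not_le]; linarith), mul_zero, add_zero]

lemma qStar_eq_of_mem_ambig (hρ0 : 0 < ρ) (hρp : ρ ≤ p) (hp1 : p ≤ 1) (hx0lam : x0 < lam)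
    (hlamM : lam ≤ M) (hF : F ∈ Ambig ρ M (twoPoint p x0 M) lam) : qStar ρ F = x0 := by
  have hp0 : 0 ≤ p := hρ0.le.trans hρp
  refine qStar_eq_of_forall_lt ?_ fun q hq => ?_
  · rw [toReal_measure_Iic_of_mem_ambig hp0 hp1 hlamM hF hx0lam,
      indicator_of_mem (mem_Iic.2 le_rfl)]
    simpa using hρp
  · rw [toReal_measure_Iic_of_mem_ambig hp0 hp1 hlamM hF (hq.trans hx0lam),
      indicator_of_notMem (by simpa using hq)]
    simpa using hρ0

lemma le_qStar_of_mem_ambig (hρ1 : ρ < 1) (hpρ : p < ρ) (hp0 : 0 ≤ p) (hlamM : lam ≤ M)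
    (hF : F ∈ Ambig ρ M (twoPoint p x0 M) lam) : lam ≤ qStar ρ F := by
  have := hF.1.1
  refine le_qStar_of_forall_lt hρ1 fun q hq => ?_
  rw [toReal_measure_Iic_of_mem_ambig hp0 (by linarith) hlamM hF hq]
  by_cases hx : x0 ∈ Iic q <;> simp [hx] <;> linarith

lemma risk_twoPoint_nonpos (hb : 0 ≤ b) (hh : 0 ≤ h) (hρ0 : 0 < ρ) (hρp : ρ ≤ p) (hp1 : p ≤ 1)
    (hx0 : 0 ≤ x0) (hx0lam : x0 < lam) (hlamM : lam ≤ M) :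
    Risk b h ρ M (twoPoint p x0 M) lam ≤ 0 := by
  refine (risk_le_regret hb hh hρ0 ⟨hx0, by linarith⟩).trans (Real.sSup_nonpos ?_)
  rintro _ ⟨F, hF, rfl⟩
  dsimp only
  rw [qStar_eq_of_mem_ambig hρ0 hρp hp1 hx0lam hlamM hF, sub_self]

lemma nvCost_sub_nvCost_qStar_le_max (hb : 0 ≤ b) (hh : 0 ≤ h) (hρ : ρ * (b + h) = b)
    (hρ1 : ρ < 1) (hpρ : p < ρ) (hp0 : 0 ≤ p) (hx0lam : x0 < lam) (hlamM : lam ≤ M)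
    (hF : F ∈ Ambig ρ M (twoPoint p x0 M) lam) (hq : lam ≤ q) :
    nvCost b h F q - nvCost b h F (qStar ρ F) ≤
      max (h * (q - lam)) ((b + h) * (ρ - p) * (M - q)) := by
  have := hF.1.1
  have hFi := hF.1.2.2.1
  have hqM := hF.1.2.2.2
  have hlam := le_qStar_of_mem_ambig hρ1 hpρ hp0 hlamM hF
  rcases le_total (qStar ρ F) q with hle | hle
  · refine (nvCost_sub_nvCost_le_of_le hb hh hFi hle).trans (le_max_of_le_left ?_)
    nlinarith
  · have hcdf : p ≤ (F (Iic q)).toReal := by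
      have hx0 : (F (Iic x0)).toReal = p := by
        rw [toReal_measure_Iic_of_mem_ambig hp0 (by linarith) hlamM hF hx0lam,
          indicator_of_mem (mem_Iic.2 le_rfl), Pi.one_apply, mul_one]
      exact hx0 ▸ ENNReal.toReal_mono (measure_ne_top _ _)
        (measure_mono (Iic_subset_Iic.2 (hx0lam.le.trans hq)))
    refine (nvCost_sub_nvCost_le_cdf hb hh hFi hle).trans (le_max_of_le_right ?_)
    calc (qStar ρ F - q) * (b - (b + h) * (F (Iic q)).toReal)
        ≤ (qStar ρ F - q) * (b - (b + h) * p) :=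
          mul_le_mul_of_nonneg_left (by nlinarith) (sub_nonneg.2 hle)
      _ = (b + h) * (ρ - p) * (qStar ρ F - q) := by linear_combination (q - qStar ρ F) * hρ
      _ ≤ (b + h) * (ρ - p) * (M - q) :=
          mul_le_mul_of_nonneg_left (by linarith) (mul_nonneg (by linarith) (by linarith))

lemma risk_twoPoint_le (hb : 0 ≤ b) (hh : 0 < h) (hρ : ρ * (b + h) = b) (hρ1 : ρ < 1)
    (hpρ : p < ρ) (hp0 : 0 ≤ p) (hx0 : 0 ≤ x0) (hx0lam : x0 < lam) (hlamM : lam ≤ M)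
    {s : ℝ} (hs : s = (b + h) * (ρ - p)) :
    Risk b h ρ M (twoPoint p x0 M) lam ≤ h * s * (M - lam) / (h + s) := by
  have hρ0 : 0 < ρ := hp0.trans_lt hpρ
  have hs0 : 0 < s := hs ▸ mul_pos (by linarith) (by linarith)
  have hgap : 0 ≤ s * (M - lam) / (h + s) := div_nonneg (by nlinarith) (by linarith)
  have hgapM : s * (M - lam) / (h + s) ≤ M - lam := by
    rw [div_le_iff₀ (by linarith)]
    nlinarith
  set qbar := lam + s * (M - lam) / (h + s) with hqbar
  have hV : max (h * (qbar - lam)) ((b + h) * (ρ - p) * (M - qbar)) =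
      h * s * (M - lam) / (h + s) := by
    rw [← hs, max_eq_left (le_of_eq _)] <;> rw [hqbar] <;> field_simp <;> ring
  refine (risk_le_regret hb hh.le hρ0 (q := qbar) ⟨by linarith, by linarith⟩).trans
    (Real.sSup_le ?_ (by rw [← hV]; exact le_max_of_le_left (by nlinarith)))
  rintro _ ⟨F, hF, rfl⟩
  exact hV ▸ nvCost_sub_nvCost_qStar_le_max hb hh.le hρ hρ1 hpρ hp0 hx0lam hlamM hF
    (by linarith)

lemma le_regret_twoPoint_of_le (hb : 0 ≤ b) (hh : 0 ≤ h) (hρ : ρ * (b + h) = b) (hρ0 : 0 < ρ)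
    (hρp : ρ ≤ p) (hp1 : p ≤ 1) (hx0 : 0 ≤ x0) (hx0lam : x0 < lam) (hlamM : lam ≤ M)
    (hq : q ∈ Icc 0 M) :
    (b + h) * (p - ρ) * (min q lam - x0) ≤ Regret b h ρ M (twoPoint p x0 M) lam q := by
  have hp0 : 0 ≤ p := hρ0.le.trans hρp
  have hloss := mul_sub_le_loss hb hh q
  rcases le_total q lam with hql | hlq
  · refine le_trans ?_ (nvCost_sub_nvCost_qStar_le_regret hb hh hρ0 hq
      (twoPoint_mem_ambig hρ0 (by linarith) hp0 hp1 hx0 hx0lam hlamM le_rfl))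
    rw [min_eq_left hql, qStar_twoPoint_of_le hρ0 hρp hp1 (hx0lam.trans_le hlamM),
      nvCost_twoPoint hp0 hp1, nvCost_twoPoint hp0 hp1, loss_of_ge hq.2,
      loss_of_ge (hx0lam.trans_le hlamM).le, loss_of_le le_rfl]
    nlinarith [hloss x0]
  · refine le_trans ?_ (nvCost_sub_nvCost_qStar_le_regret hb hh hρ0 hq
      (twoPoint_mem_ambig hρ0 (by linarith) hp0 hp1 hx0 hx0lam le_rfl hlamM))
    rw [min_eq_right hlq, qStar_twoPoint_of_le hρ0 hρp hp1 hx0lam,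
      nvCost_twoPoint hp0 hp1, nvCost_twoPoint hp0 hp1, loss_of_le hlq,
      loss_of_ge hx0lam.le, loss_of_le le_rfl]
    nlinarith [hloss x0]

lemma le_regret_twoPoint_of_lt (hb : 0 ≤ b) (hh : 0 ≤ h) (hρ : ρ * (b + h) = b) (hρ1 : ρ < 1)
    (hpρ : p < ρ) (hp0 : 0 ≤ p) (hx0 : 0 ≤ x0) (hx0lam : x0 < lam) (hlamM : lam ≤ M)
    (hq : q ∈ Icc 0 M) :
    (b + h) * (ρ - p) * (M - q) ≤ Regret b h ρ M (twoPoint p x0 M) lam q := by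
  have hρ0 : 0 < ρ := hp0.trans_lt hpρ
  refine le_trans ?_ (nvCost_sub_nvCost_qStar_le_regret hb hh hρ0 hq
    (twoPoint_mem_ambig hρ0 hρ1.le hp0 (by linarith) hx0 hx0lam hlamM le_rfl))
  rw [qStar_twoPoint_of_lt hρ1.le hpρ hp0 (hx0lam.trans_le hlamM),
    nvCost_twoPoint hp0 (by linarith), nvCost_twoPoint hp0 (by linarith), loss_of_ge hq.2,
    loss_of_le (hx0lam.trans_le hlamM).le, loss_of_ge le_rfl]
  have hρq : ρ * (b + h) * (M - q) = b * (M - q) := by rw [hρ]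
  nlinarith [mul_le_mul_of_nonneg_left (mul_sub_le_loss hb hh q x0) hp0]

lemma le_regret_twoPoint_of_lt_of_le (hb : 0 ≤ b) (hh : 0 ≤ h) (hρ1 : ρ < 1) (hpρ : p < ρ)
    (hp0 : 0 ≤ p) (hx0 : 0 ≤ x0) (hx0lam : x0 < lam) (hlamq : lam ≤ q) (hqM : q ≤ M) :
    h * (q - lam) ≤ Regret b h ρ M (twoPoint p x0 M) lam q := by
  have hρ0 : 0 < ρ := hp0.trans_lt hpρ
  refine le_trans (le_of_eq ?_) (nvCost_sub_nvCost_qStar_le_regret hb hh hρ0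
    ⟨by linarith, hqM⟩
    (twoPoint_mem_ambig hρ0 hρ1.le hp0 (by linarith) hx0 hx0lam le_rfl (hlamq.trans hqM)))
  rw [qStar_twoPoint_of_lt hρ1.le hpρ hp0 hx0lam, nvCost_twoPoint hp0 (by linarith),
    nvCost_twoPoint hp0 (by linarith), loss_of_le hlamq, loss_of_le (hx0lam.le.trans hlamq),
    loss_of_le hx0lam.le, loss_of_le le_rfl]
  ring

lemma le_regret_add_regret_twoPoint (hb : 0 ≤ b) (hh : 0 < h) (hρ : ρ * (b + h) = b)
    (hδ0 : 0 < δ) (hδρ : δ ≤ ρ) (hδ1 : δ ≤ 1 - ρ) (hx0 : 0 ≤ x0) (hx0lam : x0 < lam)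
    (hlamM : lam ≤ M) {s : ℝ} (hs : s = (b + h) * δ) (hq : q ∈ Icc 0 M) :
    h * s * (M - lam) / (h + s) + s * (lam - x0) ≤
      Regret b h ρ M (twoPoint (ρ + δ) x0 M) lam q +
        Regret b h ρ M (twoPoint (ρ - δ) x0 M) lam q := by
  have hs0 : 0 < s := hs ▸ mul_pos (by linarith) hδ0
  have hA := le_regret_twoPoint_of_le hb hh.le hρ (by linarith) (le_add_of_nonneg_right hδ0.le)
    (by linarith) hx0 hx0lam hlamM hq
  have hB := le_regret_twoPoint_of_lt hb hh.le hρ (by linarith) (sub_lt_self ρ hδ0)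
    (by linarith) hx0 hx0lam hlamM hq
  rw [add_sub_cancel_left, ← hs] at hA
  rw [sub_sub_cancel, ← hs] at hB
  rcases le_total q lam with hql | hlq
  · have hV : h * s * (M - lam) / (h + s) ≤ s * (M - lam) := by
      rw [div_le_iff₀ (by linarith)]
      nlinarith [mul_nonneg (mul_nonneg hs0.le hs0.le) (sub_nonneg.2 hlamM)]
    rw [min_eq_left hql] at hA
    nlinarith
  · have hB' := le_regret_twoPoint_of_lt_of_le (b := b) (M := M) hb hh.le (by linarith)
      (sub_lt_self ρ hδ0) (by linarith) hx0 hx0lam hlq hq.2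
    -- `(h + s) V = h · s (M - q) + s · h (q - lam)`: `V` is a weighted mean of the two bounds
    have hV : h * s * (M - lam) / (h + s) ≤ max (s * (M - q)) (h * (q - lam)) := by
      rw [div_le_iff₀ (by linarith)]
      nlinarith [le_max_left (s * (M - q)) (h * (q - lam)),
        le_max_right (s * (M - q)) (h * (q - lam))]
    rw [min_eq_right hlq] at hA
    linarith [max_le hB hB']

lemma expectedExcessRegret_twoPoint {N : ℕ} (π : (Fin N → ℝ) → ℝ) {p : ℝ} (hp0 : 0 ≤ p)
    (hp1 : p ≤ 1) (hx0lam : x0 ≤ lam) (hlamM : lam ≤ M) :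
    expectedExcessRegret b h ρ M lam π (twoPoint p x0 M) =
      ∑ v : Fin N → Bool, bernoulliWeight p v *
        (Regret b h ρ M (twoPoint p x0 M) lam (π fun i => if v i then x0 else lam) -
          Risk b h ρ M (twoPoint p x0 M) lam) := by
  have := isProbabilityMeasure_twoPoint hp0 hp1 x0 M
  rw [expectedExcessRegret, iidPi_eq_pi, integral_pi_twoPoint hp0 hp1]
  refine Finset.sum_congr rfl fun v _ => ?_
  congr 4
  funext i
  dsimp only
  split_ifs
  · exact min_eq_left hx0lam
  · exact min_eq_right hlamM

lemma mul_sum_min_le_expectedExcessRegret_add (hb : 0 ≤ b) (hh : 0 < h)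
    (hρ : ρ * (b + h) = b) (hδ0 : 0 < δ) (hδρ : δ ≤ ρ) (hδ1 : δ ≤ 1 - ρ) (hx0 : 0 ≤ x0)
    (hx0lam : x0 < lam) (hlamM : lam ≤ M) {N : ℕ} {π : (Fin N → ℝ) → ℝ}
    (hπ : ∀ d, π d ∈ Icc 0 M) :
    (b + h) * δ * (lam - x0) *
        ∑ v : Fin N → Bool, min (bernoulliWeight (ρ + δ) v) (bernoulliWeight (ρ - δ) v) ≤
      expectedExcessRegret b h ρ M lam π (twoPoint (ρ + δ) x0 M) +
        expectedExcessRegret b h ρ M lam π (twoPoint (ρ - δ) x0 M) := by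
  have hρ0 : 0 < ρ := hδ0.trans_le hδρ
  rw [expectedExcessRegret_twoPoint π (by linarith) (by linarith) hx0lam.le hlamM,
    expectedExcessRegret_twoPoint π (by linarith) (by linarith) hx0lam.le hlamM]
  refine mul_sum_min_le (bernoulliWeight_nonneg (by linarith) (by linarith))
    (bernoulliWeight_nonneg (by linarith) (by linarith))
    (fun v => sub_nonneg.2 (risk_le_regret hb hh.le hρ0 (hπ _)))
    (fun v => sub_nonneg.2 (risk_le_regret hb hh.le hρ0 (hπ _))) fun v => ?_
  have hsum := le_regret_add_regret_twoPoint hb hh hρ hδ0 hδρ hδ1 hx0 hx0lam hlamM rfl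
    (hπ fun i => if v i then x0 else lam)
  have hhigh := risk_twoPoint_nonpos hb hh.le hρ0 (le_add_of_nonneg_right hδ0.le)
    (by linarith) hx0 hx0lam hlamM
  have hlow := risk_twoPoint_le hb hh hρ (by linarith) (sub_lt_self ρ hδ0) (by linarith) hx0
    hx0lam hlamM (s := (b + h) * δ) (by ring)
  linarith

lemma le_sSup_expectedExcessRegret {tol : ℝ} (hb : 0 ≤ b) (hh : 0 < h)
    (hρ : ρ * (b + h) = b) (hlam0 : 0 < lam) (hlamM : lam ≤ M) {N : ℕ}
    {π : (Fin N → ℝ) → ℝ} (hπ : ∀ d, π d ∈ Icc 0 M) (hδ0 : 0 < δ) (hδρ : δ ≤ ρ)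
    (hδ1 : δ ≤ 1 - ρ) (hN : 32 * N * δ ^ 2 ≤ ρ * (1 - ρ)) (htol : δ ≤ tol) :
    (b + h) * δ * lam * Real.exp (-(1 / 2)) / 8 ≤
      sSup {r : ℝ | ∃ G ∈ GoodDist ρ M, |(G (Iio lam)).toReal - ρ| ≤ tol ∧
        r = expectedExcessRegret b h ρ M lam π G} := by
  have hρ0 : 0 < ρ := hδ0.trans_le hδρ
  have hρ1 : ρ < 1 := by linarith
  have hx0lam : lam / 2 < lam := half_lt_self hlam0
  have hbdd : BddAbove {r : ℝ | ∃ G ∈ GoodDist ρ M, |(G (Iio lam)).toReal - ρ| ≤ tol ∧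
      r = expectedExcessRegret b h ρ M lam π G} := by
    refine ⟨2 * ((b + h) * M), ?_⟩
    rintro _ ⟨G, ⟨_, -⟩, -, rfl⟩
    exact le_of_abs_le (abs_expectedExcessRegret_le hb hh.le hρ0 (by linarith) hπ)
  have hmem : ∀ p, 0 ≤ p → p ≤ 1 → |p - ρ| ≤ tol →
      expectedExcessRegret b h ρ M lam π (twoPoint p (lam / 2) M) ≤
        sSup {r : ℝ | ∃ G ∈ GoodDist ρ M, |(G (Iio lam)).toReal - ρ| ≤ tol ∧
          r = expectedExcessRegret b h ρ M lam π G} := fun p hp0 hp1 hp => by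
    refine le_csSup hbdd ⟨twoPoint p (lam / 2) M,
      (twoPoint_mem_ambig hρ0 hρ1.le hp0 hp1 (by linarith) hx0lam hlamM le_rfl).1, ?_, rfl⟩
    rwa [twoPoint_toReal hp0 hp1, indicator_of_mem (mem_Iio.2 hx0lam),
      indicator_of_notMem (a := M) (by simpa using hlamM), Pi.one_apply, mul_one, mul_zero,
      add_zero]
  have hplus := hmem (ρ + δ) (by linarith) (by linarith) (by simpa [abs_of_pos hδ0] using htol)
  have hminus := hmem (ρ - δ) (by linarith) (by linarith) (by simpa [abs_of_pos hδ0] using htol)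
  have hlecam := mul_sum_min_le_expectedExcessRegret_add hb hh hρ hδ0 hδρ hδ1
    (by linarith) hx0lam hlamM hπ
  have hoverlap := exp_neg_half_le_two_mul_sum_min (ι := Fin N) hρ0 hρ1 hδ0.le hδρ hδ1
    (by simpa using hN)
  have hscale : 0 ≤ (b + h) * δ * (lam - lam / 2) := by positivity
  nlinarith [mul_le_mul_of_nonneg_left hoverlap hscale]

lemma separation_bounds {ρ : ℝ} (hρ0 : 0 < ρ) (hρ1 : ρ < 1) {N : ℕ} (hN : 1 ≤ N) :
    0 < √(1 - ρ) * min ρ (1 - ρ) / (4 * √(N : ℝ)) ∧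
      √(1 - ρ) * min ρ (1 - ρ) / (4 * √(N : ℝ)) ≤ min ρ (1 - ρ) ∧
      32 * N * (√(1 - ρ) * min ρ (1 - ρ) / (4 * √(N : ℝ))) ^ 2 ≤ ρ * (1 - ρ) ∧
      √(1 - ρ) * min ρ (1 - ρ) / (4 * √(N : ℝ)) ≤ √(1 - ρ) / (4 * √(N : ℝ)) := by
  set m := min ρ (1 - ρ)
  have hm0 : 0 < m := lt_min hρ0 (by linarith)
  have hm1 : m ≤ 1 - ρ := min_le_right _ _
  have hm2 : 2 * m ^ 2 ≤ ρ := by nlinarith [min_le_left ρ (1 - ρ), min_le_right ρ (1 - ρ)]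
  have hs0 : 0 < √(1 - ρ) := Real.sqrt_pos.2 (by linarith)
  have hs1 : √(1 - ρ) ≤ 1 := Real.sqrt_le_one.2 (by linarith)
  have hn1 : 1 ≤ √(N : ℝ) := Real.one_le_sqrt.2 (by exact_mod_cast hN)
  refine ⟨by positivity, ?_, ?_, div_le_div_of_nonneg_right
    (mul_le_of_le_one_right hs0.le (by linarith)) (by positivity)⟩
  · rw [div_le_iff₀ (by positivity)]
    nlinarith [mul_le_mul hs1 hn1 zero_le_one (by linarith)]
  · rw [div_pow, mul_pow, mul_pow, Real.sq_sqrt (by linarith : (0 : ℝ) ≤ 1 - ρ),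
      Real.sq_sqrt (Nat.cast_nonneg N), mul_div_assoc', div_le_iff₀ (by positivity)]
    nlinarith [mul_le_mul_of_nonneg_left hm2
      (mul_nonneg (Nat.cast_nonneg N) (by linarith) : (0 : ℝ) ≤ N * (1 - ρ))]

end KnifeEdge

end Newsvendor

open Newsvendor in
theorem stmt18_general (b h M lam ρ : ℝ) (hb : 0 < b) (hh : 0 < h)
    (hlam0 : 0 < lam) (hlam1 : lam < 1) (hM : 1 ≤ M)
    (hρ : ρ = b / (b + h)) (N : ℕ) (hN : 1 ≤ N)
    (π : (Fin N → ℝ) → ℝ) (hrange : ∀ d, π d ∈ Icc (0 : ℝ) M) :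
    lam * (b + h) * Real.sqrt (1 - ρ) * min ρ (1 - ρ) * Real.exp (-(1 / 2 : ℝ)) /
        (32 * Real.sqrt (N : ℝ)) ≤
      sSup {r : ℝ | ∃ G ∈ GoodDist ρ M,
        |(G (Iio lam)).toReal - ρ| ≤ Real.sqrt (1 - ρ) / (4 * Real.sqrt (N : ℝ)) ∧
        r = ∫ d, (Regret b h ρ M G lam (π fun i => min (d i) lam)
                    - Risk b h ρ M G lam) ∂(iidPi N G)} := by
  have hbh : 0 < b + h := add_pos hb hh
  have hρb : ρ * (b + h) = b := by rw [hρ, div_mul_cancel₀ _ hbh.ne']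
  have hρ0 : 0 < ρ := hρ ▸ div_pos hb hbh
  have hρ1 : ρ < 1 := by rw [hρ, div_lt_one hbh]; linarith
  obtain ⟨hδ0, hδm, hδN, hδtol⟩ := separation_bounds hρ0 hρ1 hN
  calc _ = (b + h) * (√(1 - ρ) * min ρ (1 - ρ) / (4 * √(N : ℝ))) * lam *
          Real.exp (-(1 / 2)) / 8 := by ring
    _ ≤ _ := le_sSup_expectedExcessRegret hb.le hh hρb hlam0 (by linarith) hrange hδ0
      (hδm.trans (min_le_left _ _)) (hδm.trans (min_le_right _ _)) hδN hδtol

/-- lower bound in the knife-edge regime. -/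
theorem stmt18 (b h M lam ρ : ℝ) (hb : 0 < b) (hh : 0 < h)
    (hlam0 : 0 < lam) (hlam1 : lam < 1) (hM : 1 ≤ M)
    (hρ : ρ = b / (b + h)) (N : ℕ) (hN : 1 ≤ N)
    (π : (Fin N → ℝ) → ℝ) (hmeas : Measurable π) (hrange : ∀ d, π d ∈ Icc (0 : ℝ) M) :
    lam * (b + h) * Real.sqrt (1 - ρ) * min ρ (1 - ρ) * Real.exp (-(1 / 2 : ℝ)) /
        (32 * Real.sqrt (N : ℝ)) ≤
      sSup {r : ℝ | ∃ G ∈ GoodDist ρ M,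
        |(G (Iio lam)).toReal - ρ| ≤ Real.sqrt (1 - ρ) / (4 * Real.sqrt (N : ℝ)) ∧
        r = ∫ d, (Regret b h ρ M G lam (π fun i => min (d i) lam)
                    - Risk b h ρ M G lam) ∂(iidPi N G)} :=
  stmt18_general b h M lam ρ hb hh hlam0 hlam1 hM hρ N hN π hrange
end
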